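/- arXiv:1110.5955 — 3 statements merged into one kernel-verified Lean document; each statement's English description precedes it below -/
import Mathlib

section
/- A left module over the trivial extension T = A ⊕ X is the same data as a pair (M, σ) where M is a left A-module and σ : X ⊗_A M → M is a morphism of left A-modules satisfying σ ∘ (Id_X ⊗ σ) = 0; more precisely, there is an equivalence between the category of left T-modules and the category of such pairs, where morphisms (M,σ) → (N,δ) are A-module maps f : M → N with f ∘ σ = δ ∘ (Id_X ⊗ f). -/
open MulOpposite

namespace Paper

noncomputable section

section Tens

variable (A : Type) [Ring A] (M N : Type) [AddCommGroup M] [AddCommGroup N]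
  [Module Aᵐᵒᵖ M] [Module A N]

/-- The balancing relations for the tensor product `M ⊗_A N` of a right `A`-module `M`
and a left `A`-module `N` over a (possibly noncommutative) ring `A`. -/
def TensRel : AddSubgroup (TensorProduct ℤ M N) :=
  AddSubgroup.closure {z | ∃ (a : A) (m : M) (n : N),
    z = (op a • m) ⊗ₜ[ℤ] n - m ⊗ₜ[ℤ] (a • n)}

/-- The tensor product `M ⊗_A N` over a (possibly noncommutative) ring `A`,
where `M` is a right `A`-module and `N` is a left `A`-module. -/
def Tens : Type := (TensorProduct ℤ M N) ⧸ TensRel A M N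

instance : AddCommGroup (Tens A M N) :=
  QuotientAddGroup.Quotient.addCommGroup _

variable {A M N}

/-- The canonical map `M × N → M ⊗_A N`, `(m, n) ↦ m ⊗ n`. -/
def Tens.mk (m : M) (n : N) : Tens A M N := QuotientAddGroup.mk (m ⊗ₜ[ℤ] n)

theorem Tens.mk_add_left (m m' : M) (n : N) :
    (Tens.mk (m + m') n : Tens A M N) = Tens.mk m n + Tens.mk m' n := by
  show QuotientAddGroup.mk _ = QuotientAddGroup.mk _
  rw [TensorProduct.add_tmul]

theorem Tens.mk_add_right (m : M) (n n' : N) :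
    (Tens.mk m (n + n') : Tens A M N) = Tens.mk m n + Tens.mk m n' := by
  show QuotientAddGroup.mk _ = QuotientAddGroup.mk _
  rw [TensorProduct.tmul_add]

@[simp] theorem Tens.mk_zero_left (n : N) : (Tens.mk 0 n : Tens A M N) = 0 := by
  show QuotientAddGroup.mk _ = QuotientAddGroup.mk _
  rw [TensorProduct.zero_tmul]

@[simp] theorem Tens.mk_zero_right (m : M) : (Tens.mk m 0 : Tens A M N) = 0 := by
  show QuotientAddGroup.mk _ = QuotientAddGroup.mk _
  rw [TensorProduct.tmul_zero]

theorem Tens.mk_balance (a : A) (m : M) (n : N) :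
    (Tens.mk (op a • m) n : Tens A M N) = Tens.mk m (a • n) := by
  refine (QuotientAddGroup.eq (s := TensRel A M N) ..).2 ?_
  have h : ((op a • m) ⊗ₜ[ℤ] n - m ⊗ₜ[ℤ] (a • n)) ∈ TensRel A M N :=
    AddSubgroup.subset_closure ⟨a, m, n, rfl⟩
  simpa [neg_add_eq_sub] using AddSubgroup.neg_mem _ h

@[simp] theorem Tens.mk_neg_left (m : M) (n : N) :
    (Tens.mk (-m) n : Tens A M N) = -Tens.mk m n := by
  show QuotientAddGroup.mk _ = -QuotientAddGroup.mk _
  rw [TensorProduct.neg_tmul]; rfl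

@[simp] theorem Tens.mk_neg_right (m : M) (n : N) :
    (Tens.mk m (-n) : Tens A M N) = -Tens.mk m n := by
  show QuotientAddGroup.mk _ = -QuotientAddGroup.mk _
  rw [TensorProduct.tmul_neg]; rfl

theorem Tens.ind {motive : Tens A M N → Prop} (zero : motive 0)
    (mk : ∀ m n, motive (Tens.mk m n))
    (add : ∀ x y, motive x → motive y → motive (x + y)) : ∀ z, motive z := by
  intro z
  obtain ⟨t, rfl⟩ := QuotientAddGroup.mk_surjective z
  induction t using TensorProduct.induction_on with
  | zero => exact zero
  | tmul m n => exact mk m n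
  | add x y hx hy => exact add _ _ hx hy

section lift

variable {P : Type} [AddCommGroup P]

private def toIntBilin (f : M →+ N →+ P) : M →ₗ[ℤ] N →ₗ[ℤ] P where
  toFun m := (f m).toIntLinearMap
  map_add' m m' := by ext n; simp
  map_smul' c m := by ext n; simp

/-- Lifting a balanced biadditive map to the tensor product. -/
def Tens.lift (f : M →+ N →+ P)
    (hf : ∀ (a : A) (m : M) (n : N), f (op a • m) n = f m (a • n)) :
    Tens A M N →+ P := by
  refine QuotientAddGroup.lift (TensRel A M N)
    (TensorProduct.lift (toIntBilin f)).toAddMonoidHom ?_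
  intro t ht
  refine AddSubgroup.closure_induction ?_ ?_ ?_ ?_ ht
  · rintro z ⟨a, m, n, rfl⟩
    simp [toIntBilin, hf a m n]
  · simp
  · intro x y _ _ hx hy
    have hx' : TensorProduct.lift (toIntBilin f) x = 0 := hx
    have hy' : TensorProduct.lift (toIntBilin f) y = 0 := hy
    simp [hx', hy']
  · intro x _ hx
    have hx' : TensorProduct.lift (toIntBilin f) x = 0 := hx
    simp [hx']

@[simp] theorem Tens.lift_mk (f : M →+ N →+ P)
    (hf : ∀ (a : A) (m : M) (n : N), f (op a • m) n = f m (a • n)) (m : M) (n : N) :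
    Tens.lift f hf (Tens.mk m n) = f m n := by
  show TensorProduct.lift (toIntBilin f) (m ⊗ₜ[ℤ] n) = f m n
  simp [toIntBilin]

end lift

end Tens

section AddHomExt

variable {A : Type} [Ring A] {M N : Type} [AddCommGroup M] [AddCommGroup N]
  [Module Aᵐᵒᵖ M] [Module A N] {P : Type} [AddCommGroup P]

theorem Tens.addHom_ext {f g : Tens A M N →+ P}
    (h : ∀ m n, f (Tens.mk m n) = g (Tens.mk m n)) : f = g := by
  ext z
  refine Tens.ind (motive := fun z => f z = g z) ?_ h ?_ z
  · simp
  · intro x y hx hy; simp [hx, hy]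

end AddHomExt

section LeftModule

variable {A : Type} [Ring A] {M N : Type} [AddCommGroup M] [AddCommGroup N]
  [Module Aᵐᵒᵖ M] [Module A N]
  {B : Type} [Ring B] [Module B M] [SMulCommClass Aᵐᵒᵖ B M]

/-- Left scalar multiplication on the tensor product via the left factor. -/
def Tens.lsmul (b : B) : Tens A M N →+ Tens A M N :=
  Tens.lift
    { toFun := fun m =>
        { toFun := fun n => Tens.mk (b • m) n
          map_zero' := by simp
          map_add' := fun n n' => Tens.mk_add_right _ _ _ }
      map_zero' := by ext n; simp
      map_add' := fun m m' => by ext n; simp [smul_add, Tens.mk_add_left] }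
    (by intro a m n
        simp only [AddMonoidHom.coe_mk, ZeroHom.coe_mk]
        rw [← smul_comm (op a) b m, Tens.mk_balance])

theorem Tens.lsmul_mk (b : B) (m : M) (n : N) :
    Tens.lsmul b (Tens.mk m n : Tens A M N) = Tens.mk (b • m) n := by
  simp [Tens.lsmul]

instance : SMul B (Tens A M N) := ⟨fun b z => Tens.lsmul b z⟩

@[simp] theorem Tens.smul_mk (b : B) (m : M) (n : N) :
    b • (Tens.mk m n : Tens A M N) = Tens.mk (b • m) n :=
  Tens.lsmul_mk b m n

instance : MulAction B (Tens A M N) where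
  one_smul z := DFunLike.congr_fun
    (Tens.addHom_ext (f := Tens.lsmul (1 : B)) (g := AddMonoidHom.id _)
      (fun m n => by rw [Tens.lsmul_mk, one_smul]; rfl)) z
  mul_smul b c z := DFunLike.congr_fun
    (Tens.addHom_ext (f := Tens.lsmul (b * c)) (g := (Tens.lsmul b).comp (Tens.lsmul c))
      (fun m n => by
        simp only [AddMonoidHom.coe_comp, Function.comp_apply, Tens.lsmul_mk, mul_smul])) z
  
instance : DistribMulAction B (Tens A M N) where
  smul_zero b := (Tens.lsmul b).map_zero
  smul_add b x y := (Tens.lsmul b).map_add x y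

instance Tens.instLeftModule : Module B (Tens A M N) where
  add_smul b c z := DFunLike.congr_fun
    (Tens.addHom_ext (f := Tens.lsmul (b + c)) (g := Tens.lsmul b + Tens.lsmul c)
      (fun m n => by
        simp only [AddMonoidHom.add_apply, Tens.lsmul_mk, add_smul, Tens.mk_add_left])) z
  zero_smul z := DFunLike.congr_fun
    (Tens.addHom_ext (f := Tens.lsmul (0 : B)) (g := 0)
      (fun m n => by simp [Tens.lsmul_mk])) z

end LeftModule

section RightModule

variable {A : Type} [Ring A] {M N : Type} [AddCommGroup M] [AddCommGroup N]
  [Module Aᵐᵒᵖ M] [Module A N]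
  {C : Type} [Ring C] [Module Cᵐᵒᵖ N] [SMulCommClass A Cᵐᵒᵖ N]

/-- Right scalar multiplication on the tensor product via the right factor. -/
def Tens.rsmul (c : Cᵐᵒᵖ) : Tens A M N →+ Tens A M N :=
  Tens.lift
    { toFun := fun m =>
        { toFun := fun n => Tens.mk m (c • n)
          map_zero' := by simp
          map_add' := fun n n' => by
            show (Tens.mk m (c • (n + n')) : Tens A M N) = _
            rw [smul_add, Tens.mk_add_right] }
      map_zero' := by ext n; simp
      map_add' := fun m m' => by ext n; exact Tens.mk_add_left _ _ _ }
    (by intro a m n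
        show (Tens.mk (op a • m) (c • n) : Tens A M N) = Tens.mk m (c • a • n)
        rw [Tens.mk_balance, smul_comm])

theorem Tens.rsmul_mk (c : Cᵐᵒᵖ) (m : M) (n : N) :
    Tens.rsmul c (Tens.mk m n : Tens A M N) = Tens.mk m (c • n) := by
  simp [Tens.rsmul]

instance : SMul Cᵐᵒᵖ (Tens A M N) := ⟨fun c z => Tens.rsmul c z⟩

@[simp] theorem Tens.op_smul_mk (c : Cᵐᵒᵖ) (m : M) (n : N) :
    c • (Tens.mk m n : Tens A M N) = Tens.mk m (c • n) :=
  Tens.rsmul_mk c m n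

instance : MulAction Cᵐᵒᵖ (Tens A M N) where
  one_smul z := DFunLike.congr_fun
    (Tens.addHom_ext (f := Tens.rsmul (1 : Cᵐᵒᵖ)) (g := AddMonoidHom.id _)
      (fun m n => by rw [Tens.rsmul_mk, one_smul]; rfl)) z
  mul_smul b c z := DFunLike.congr_fun
    (Tens.addHom_ext (f := Tens.rsmul (b * c)) (g := (Tens.rsmul b).comp (Tens.rsmul c))
      (fun m n => by
        simp only [AddMonoidHom.coe_comp, Function.comp_apply, Tens.rsmul_mk, mul_smul])) z

instance : DistribMulAction Cᵐᵒᵖ (Tens A M N) where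
  smul_zero c := (Tens.rsmul c).map_zero
  smul_add c x y := (Tens.rsmul c).map_add x y

instance Tens.instRightModule : Module Cᵐᵒᵖ (Tens A M N) where
  add_smul b c z := DFunLike.congr_fun
    (Tens.addHom_ext (f := Tens.rsmul (b + c)) (g := Tens.rsmul b + Tens.rsmul c)
      (fun m n => by
        simp only [AddMonoidHom.add_apply, Tens.rsmul_mk, add_smul, Tens.mk_add_right])) z
  zero_smul z := DFunLike.congr_fun
    (Tens.addHom_ext (f := Tens.rsmul (0 : Cᵐᵒᵖ)) (g := 0)
      (fun m n => by simp [Tens.rsmul_mk])) z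

end RightModule

section BimoduleTens

variable {A : Type} [Ring A] {M N : Type} [AddCommGroup M] [AddCommGroup N]
  [Module Aᵐᵒᵖ M] [Module A N]
  {B : Type} [Ring B] [Module B M] [SMulCommClass Aᵐᵒᵖ B M]
  {C : Type} [Ring C] [Module Cᵐᵒᵖ N] [SMulCommClass A Cᵐᵒᵖ N]

instance Tens.instSMulCommClass : SMulCommClass B Cᵐᵒᵖ (Tens A M N) where
  smul_comm b c z := by
    refine Tens.ind (motive := fun z => b • c • z = c • b • z) ?_ ?_ ?_ z
    · simp only [smul_zero]
    · intro m n
      rw [Tens.op_smul_mk, Tens.smul_mk, Tens.smul_mk, Tens.op_smul_mk]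
    · intro x y hx hy; simp only [smul_add, hx, hy]

instance Tens.instSMulCommClass' : SMulCommClass Cᵐᵒᵖ B (Tens A M N) :=
  SMulCommClass.symm _ _ _

end BimoduleTens

section Lifts

variable {A : Type} [Ring A] {M N : Type} [AddCommGroup M] [AddCommGroup N]
  [Module Aᵐᵒᵖ M] [Module A N]
  {B : Type} [Ring B] [Module B M] [SMulCommClass Aᵐᵒᵖ B M]

/-- Linear version of `Tens.lift`, for a balanced biadditive map which is moreover
`B`-linear in the first variable. -/
def Tens.liftL {P : Type} [AddCommGroup P] [Module B P] (f : M →+ N →+ P)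
    (hf : ∀ (a : A) (m : M) (n : N), f (op a • m) n = f m (a • n))
    (hl : ∀ (b : B) (m : M) (n : N), f (b • m) n = b • f m n) :
    Tens A M N →ₗ[B] P where
  toFun := Tens.lift f hf
  map_add' := (Tens.lift f hf).map_add
  map_smul' b z := by
    simp only [RingHom.id_apply]
    refine Tens.ind (motive := fun z => Tens.lift f hf (b • z) = b • Tens.lift f hf z) ?_ ?_ ?_ z
    · simp
    · intro m n
      rw [Tens.smul_mk, Tens.lift_mk, Tens.lift_mk, hl]
    · intro x y hx hy
      rw [smul_add, map_add, map_add, smul_add, hx, hy]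

@[simp] theorem Tens.liftL_mk {P : Type} [AddCommGroup P] [Module B P] (f : M →+ N →+ P)
    (hf : ∀ (a : A) (m : M) (n : N), f (op a • m) n = f m (a • n))
    (hl : ∀ (b : B) (m : M) (n : N), f (b • m) n = b • f m n) (m : M) (n : N) :
    Tens.liftL f hf hl (Tens.mk m n : Tens A M N) = f m n :=
  Tens.lift_mk f hf m n

/-- The functorial map `Id_M ⊗ g` on tensor products. -/
def Tens.mapRight {N' : Type} [AddCommGroup N'] [Module A N'] (g : N →ₗ[A] N') :
    Tens A M N →ₗ[B] Tens A M N' :=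
  Tens.liftL
    { toFun := fun m =>
        { toFun := fun n => Tens.mk m (g n)
          map_zero' := by simp
          map_add' := fun n n' => by
            show (Tens.mk m (g (n + n')) : Tens A M N') = _
            rw [map_add, Tens.mk_add_right] }
      map_zero' := by ext n; simp
      map_add' := fun m m' => by ext n; exact Tens.mk_add_left _ _ _ }
    (by intro a m n
        show (Tens.mk (op a • m) (g n) : Tens A M N') = Tens.mk m (g (a • n))
        rw [Tens.mk_balance, map_smul])
    (by intro b m n
        show (Tens.mk (b • m) (g n) : Tens A M N') = b • Tens.mk m (g n)
        rw [Tens.smul_mk])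

@[simp] theorem Tens.mapRight_mk {N' : Type} [AddCommGroup N'] [Module A N'] (g : N →ₗ[A] N')
    (m : M) (n : N) :
    (Tens.mapRight (B := B) g) (Tens.mk m n : Tens A M N) = Tens.mk m (g n) := by
  simp [Tens.mapRight]

theorem Tens.mapRight_comp {N' N'' : Type} [AddCommGroup N'] [Module A N']
    [AddCommGroup N''] [Module A N''] (g : N →ₗ[A] N') (h : N' →ₗ[A] N'') :
    (Tens.mapRight (B := B) (h.comp g) : Tens A M N →ₗ[B] Tens A M N'') =
      (Tens.mapRight h).comp (Tens.mapRight g) := by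
  apply LinearMap.ext
  refine Tens.ind (motive := fun z => (Tens.mapRight (B := B) (h.comp g)) z =
    ((Tens.mapRight (B := B) h).comp (Tens.mapRight g)) z) ?_ ?_ ?_
  · simp
  · intro m n; simp
  · intro x y hx hy; simp only [map_add, hx, hy]

theorem Tens.mapRight_id :
    (Tens.mapRight (B := B) (LinearMap.id : N →ₗ[A] N) : Tens A M N →ₗ[B] Tens A M N) =
      LinearMap.id := by
  apply LinearMap.ext
  refine Tens.ind (motive := fun z => (Tens.mapRight (B := B) (LinearMap.id : N →ₗ[A] N)) z =
    LinearMap.id z) ?_ ?_ ?_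
  · simp
  · intro m n; simp
  · intro x y hx hy; simp only [map_add, hx, hy]

end Lifts


section Pair

open CategoryTheory

variable (A X : Type) [Ring A] [AddCommGroup X] [Module A X] [Module Aᵐᵒᵖ X]
  [SMulCommClass A Aᵐᵒᵖ X] [SMulCommClass Aᵐᵒᵖ A X]

/-- The category of pairs `(M, σ)` with `M` a left `A`-module and
`σ : X ⊗_A M → M` an `A`-linear map with `σ ∘ (Id_X ⊗ σ) = 0`;
this models modules over the trivial extension `A ⊕ X`. -/
structure PairMod where
  carrier : Type
  [acg : AddCommGroup carrier]
  [amod : Module A carrier]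
  σ : Tens A X carrier →ₗ[A] carrier
  nil : ∀ (x : X) (z : Tens A X carrier), σ (Tens.mk x (σ z)) = 0

attribute [instance] PairMod.acg PairMod.amod

variable {A X}

/-- Morphisms of pairs: `A`-linear maps commuting with the structure maps. -/
@[ext] structure PairHom (P Q : PairMod A X) where
  f : P.carrier →ₗ[A] Q.carrier
  comm : ∀ (x : X) (m : P.carrier), f (P.σ (Tens.mk x m)) = Q.σ (Tens.mk x (f m))

instance : Category (PairMod A X) where
  Hom := PairHom
  id P := ⟨LinearMap.id, fun x m => rfl⟩
  comp {P Q R} f g := ⟨g.f.comp f.f, fun x m => by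
    simp only [LinearMap.comp_apply, f.comm, g.comm]⟩
  id_comp f := by apply PairHom.ext; rfl
  comp_id f := by apply PairHom.ext; rfl
  assoc f g h := by apply PairHom.ext; rfl

@[simp] theorem PairMod.id_f (P : PairMod A X) : (𝟙 P : PairHom P P).f = LinearMap.id := rfl

@[simp] theorem PairMod.comp_f {P Q R : PairMod A X} (f : P ⟶ Q) (g : Q ⟶ R) :
    (f ≫ g).f = g.f.comp f.f := rfl

theorem PairHom.comm' {P Q : PairMod A X} (f : P ⟶ Q) (z : Tens A X P.carrier) :
    f.f (P.σ z) = Q.σ (Tens.mapRight (B := A) f.f z) := by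
  refine Tens.ind (motive := fun z => f.f (P.σ z) = Q.σ (Tens.mapRight (B := A) f.f z))
    ?_ ?_ ?_ z
  · simp
  · intro x m; rw [f.comm, Tens.mapRight_mk]
  · intro x y hx hy; simp only [map_add, hx, hy]

variable (A X)

/-- The sign-change functor `S : (M, σ) ↦ (M, -σ)`. -/
def PMS : PairMod A X ⥤ PairMod A X where
  obj P :=
    { carrier := P.carrier
      σ := -P.σ
      nil := fun x z => by
        simp only [LinearMap.neg_apply, Tens.mk_neg_right, map_neg, neg_neg, P.nil] }
  map {P Q} f :=
    { f := f.f
      comm := fun x m => by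
        simp only [LinearMap.neg_apply, map_neg, f.comm, Tens.mk_neg_right] }
  map_id P := rfl
  map_comp f g := rfl

/-- The functor `X ⊗_A - : (M, σ) ↦ (X ⊗_A M, Id_X ⊗ σ)`. -/
def XF : PairMod A X ⥤ PairMod A X where
  obj P :=
    { carrier := Tens A X P.carrier
      σ := Tens.mapRight (B := A) P.σ
      nil := fun x z => by
        rw [Tens.mapRight_mk]
        have : P.σ (Tens.mapRight (B := A) P.σ z) = 0 := by
          refine Tens.ind (motive := fun z => P.σ (Tens.mapRight (B := A) P.σ z) = 0) ?_ ?_ ?_ z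
          · simp
          · intro x' u; rw [Tens.mapRight_mk, P.nil]
          · intro u v hu hv; simp only [map_add, hu, hv, add_zero]
        rw [this, Tens.mk_zero_right] }
  map {P Q} f :=
    { f := Tens.mapRight (B := A) f.f
      comm := fun x m => by
        rw [Tens.mapRight_mk, Tens.mapRight_mk, Tens.mapRight_mk, PairHom.comm'] }
  map_id P := by
    apply PairHom.ext
    exact Tens.mapRight_id
  map_comp f g := by
    apply PairHom.ext
    exact Tens.mapRight_comp _ _

/-- The forgetful (restriction) functor to `A`-modules. -/
def resF : PairMod A X ⥤ ModuleCat.{0} A where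
  obj P := ModuleCat.of A P.carrier
  map f := ModuleCat.ofHom f.f

/-- The structure map of the pair corresponding to `T ⊗_A L`. -/
def tau (L : Type) [AddCommGroup L] [Module A L] :
    Tens A X (L × Tens A X L) →ₗ[A] (L × Tens A X L) :=
  Tens.liftL
    { toFun := fun x =>
        { toFun := fun p => (0, Tens.mk x p.1)
          map_zero' := by simp
          map_add' := fun p q => by simp [Tens.mk_add_right, Prod.ext_iff] }
      map_zero' := by ext p <;> simp
      map_add' := fun x x' => by ext p <;> simp [Tens.mk_add_left] }
    (by intro a x p
        show ((0 : L), Tens.mk (op a • x) p.1) = ((0 : L), Tens.mk x (a • p.1))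
        rw [Tens.mk_balance])
    (by intro a x p
        show ((0 : L), Tens.mk (a • x) p.1) = a • ((0 : L), Tens.mk x p.1)
        rw [Prod.smul_mk, smul_zero, Tens.smul_mk])

@[simp] theorem tau_mk (L : Type) [AddCommGroup L] [Module A L] (x : X) (p : L × Tens A X L) :
    tau A X L (Tens.mk x p) = (0, Tens.mk x p.1) := by
  simp [tau]

theorem tau_fst (L : Type) [AddCommGroup L] [Module A L] (z : Tens A X (L × Tens A X L)) :
    (tau A X L z).1 = 0 := by
  refine Tens.ind (motive := fun z => (tau A X L z).1 = 0) ?_ ?_ ?_ z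
  · simp
  · intro x p; simp
  · intro u v hu hv; simp only [map_add, Prod.fst_add, hu, hv, add_zero]

/-- The pair corresponding to the induced module `T ⊗_A L`. -/
def TFobj (L : Type) [AddCommGroup L] [Module A L] : PairMod A X where
  carrier := L × Tens A X L
  σ := tau A X L
  nil := fun x z => by
    rw [show tau A X L z = (0, (tau A X L z).2) from Prod.ext (tau_fst A X L z) rfl]
    rw [tau_mk]
    simp

/-- The functor `T ⊗_A - : A-Mod → T-Mod` at the level of pairs. -/
def TF : ModuleCat.{0} A ⥤ PairMod A X where
  obj L := TFobj A X L
  map {L L'} g :=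
    { f := LinearMap.prodMap g.hom (Tens.mapRight (B := A) g.hom)
      comm := fun x m => by
        show LinearMap.prodMap _ _ (tau A X L (Tens.mk x m)) = tau A X L' (Tens.mk x _)
        erw [tau_mk, tau_mk]
        show (_, Tens.mapRight (B := A) g.hom (Tens.mk x m.1)) = _
        rw [Tens.mapRight_mk]
        simp only [map_zero, Prod.mk.injEq, true_and]
        exact ⟨by simp, rfl⟩ }
  map_id L := by
    apply PairHom.ext
    apply LinearMap.ext
    rintro ⟨l, u⟩
    exact Prod.ext rfl (DFunLike.congr_fun
      (Tens.mapRight_id (A := A) (M := X) (N := L) (B := A)) u)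
  map_comp {L L' L''} f g := by
    apply PairHom.ext
    apply LinearMap.ext
    rintro ⟨l, u⟩
    exact Prod.ext rfl (DFunLike.congr_fun
      (Tens.mapRight_comp (B := A) f.hom g.hom) u)

end Pair

section Extra

open CategoryTheory

variable (A X : Type) [Ring A] [AddCommGroup X] [Module A X] [Module Aᵐᵒᵖ X]
  [SMulCommClass A Aᵐᵒᵖ X] [SMulCommClass Aᵐᵒᵖ A X]

/-- The structure map of the pair corresponding to the regular module `T = A ⊕ X`. -/
def sigmaT : Tens A X (A × X) →ₗ[A] A × X :=
  Tens.liftL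
    { toFun := fun x =>
        { toFun := fun p => ((0 : A), op p.1 • x)
          map_zero' := by simp
          map_add' := fun p q => by
            show ((0 : A), op (p.1 + q.1) • x) = ((0 : A) + 0, op p.1 • x + op q.1 • x)
            rw [Prod.mk.injEq]
            constructor
            · rw [add_zero]
            · rw [← add_smul]; rfl }
      map_zero' := by ext p <;> simp
      map_add' := fun x x' => by ext p <;> simp [smul_add] }
    (by intro a x p
        show ((0 : A), op p.1 • op a • x) = ((0 : A), op (a • p).1 • x)
        rw [Prod.mk.injEq]
        refine ⟨rfl, ?_⟩
        rw [← mul_smul]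
        rfl)
    (by intro a x p
        show ((0 : A), op p.1 • a • x) = a • ((0 : A), op p.1 • x)
        rw [Prod.smul_mk, smul_zero, smul_comm])

@[simp] theorem sigmaT_mk (x : X) (p : A × X) :
    sigmaT A X (Tens.mk x p) = ((0 : A), op p.1 • x) := by
  simp [sigmaT]

theorem sigmaT_fst (z : Tens A X (A × X)) : (sigmaT A X z).1 = 0 := by
  refine Tens.ind (motive := fun z => (sigmaT A X z).1 = 0) ?_ ?_ ?_ z
  · simp
  · intro x p; simp
  · intro u v hu hv; simp only [map_add, Prod.fst_add, hu, hv, add_zero]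

/-- The pair corresponding to the regular module `T = A ⊕ X` over the trivial extension. -/
def regT : PairMod A X where
  carrier := A × X
  σ := sigmaT A X
  nil := fun x z => by
    rw [show sigmaT A X z = (0, (sigmaT A X z).2) from Prod.ext (sigmaT_fst A X z) rfl,
      sigmaT_mk]
    simp

variable {A X}

-- The module structure over the trivial extension `T = A ⊕ X` associated to a
-- pair `(M, σ)`: the action is `(a, x) • m = a • m + σ(x ⊗ m)`.

set_option maxHeartbeats 1000000 in
def PairMod.toModule (P : PairMod A X) : Module (TrivSqZeroExt A X) P.carrier where
  smul t m := t.fst • m + P.σ (Tens.mk t.snd m)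
  one_smul m := by
    show (1 : TrivSqZeroExt A X).fst • m + P.σ (Tens.mk (1 : TrivSqZeroExt A X).snd m) = m
    rw [TrivSqZeroExt.fst_one, TrivSqZeroExt.snd_one, one_smul, Tens.mk_zero_left, map_zero,
      add_zero]
  mul_smul s t m := by
    show (s * t).fst • m + P.σ (Tens.mk (s * t).snd m)
        = s.fst • (t.fst • m + P.σ (Tens.mk t.snd m))
          + P.σ (Tens.mk s.snd (t.fst • m + P.σ (Tens.mk t.snd m)))
    rw [TrivSqZeroExt.fst_mul, TrivSqZeroExt.snd_mul]
    show (s.fst * t.fst) • m + P.σ (Tens.mk (s.fst • t.snd + MulOpposite.op t.fst • s.snd) m) = _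
    rw [Tens.mk_add_left, map_add]
    have hb : (Tens.mk (MulOpposite.op t.fst • s.snd) m : Tens A X P.carrier) = Tens.mk s.snd (t.fst • m) :=
      Tens.mk_balance _ _ _
    have h1 : (Tens.mk (s.fst • t.snd) m : Tens A X P.carrier) = s.fst • Tens.mk t.snd m :=
      (Tens.smul_mk _ _ _).symm
    rw [hb, h1, map_smul, Tens.mk_add_right, map_add, P.nil, add_zero, mul_smul, smul_add]
    abel
  smul_zero t := by
    show t.fst • (0 : P.carrier) + P.σ (Tens.mk t.snd 0) = 0
    rw [smul_zero, Tens.mk_zero_right, map_zero, add_zero]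
  smul_add t m m' := by
    show t.fst • (m + m') + P.σ (Tens.mk t.snd (m + m'))
      = (t.fst • m + P.σ (Tens.mk t.snd m)) + (t.fst • m' + P.σ (Tens.mk t.snd m'))
    rw [smul_add, Tens.mk_add_right, map_add]
    abel
  add_smul s t m := by
    show (s + t).fst • m + P.σ (Tens.mk (s + t).snd m)
      = (s.fst • m + P.σ (Tens.mk s.snd m)) + (t.fst • m + P.σ (Tens.mk t.snd m))
    rw [TrivSqZeroExt.fst_add, TrivSqZeroExt.snd_add, add_smul, Tens.mk_add_left, map_add]
    abel
  zero_smul m := by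
    show (0 : TrivSqZeroExt A X).fst • m + P.σ (Tens.mk (0 : TrivSqZeroExt A X).snd m) = 0
    rw [TrivSqZeroExt.fst_zero, TrivSqZeroExt.snd_zero, zero_smul, Tens.mk_zero_left, map_zero,
      add_zero]

/-- The bundled `T`-module associated to a pair. -/
def PairMod.toModuleCat (P : PairMod A X) : ModuleCat.{0} (TrivSqZeroExt A X) :=
  letI := P.toModule
  ModuleCat.of (TrivSqZeroExt A X) P.carrier

end Extra

section ProjDim

/-- `ProjDimLE R n M` means `M` admits a projective resolution of length at most `n`. -/
def ProjDimLE (R : Type) [Ring R] : ℕ → ModuleCat.{0} R → Prop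
  | 0, M => CategoryTheory.Projective M
  | (n+1), M => CategoryTheory.Projective M ∨
      ∃ (P K : ModuleCat.{0} R) (i : K ⟶ P) (p : P ⟶ M),
        CategoryTheory.Projective P ∧ Function.Injective i ∧ Function.Surjective p ∧
        Function.Exact i p ∧ ProjDimLE R n K

/-- `M` has finite projective dimension over `R`. -/
def FinProjDim (R : Type) [Ring R] (M : ModuleCat.{0} R) : Prop :=
  ∃ n, ProjDimLE R n M

end ProjDim

section TrivExtInst

instance (R : Type) [Ring R] : SMulCommClass Rᵐᵒᵖ R R :=
  ⟨fun a b c => by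
    rw [MulOpposite.smul_eq_mul_unop, MulOpposite.smul_eq_mul_unop, smul_eq_mul, smul_eq_mul,
      mul_assoc]⟩

variable (R Z : Type) [Ring R] [AddCommGroup Z] [Module R Z] [Module Rᵐᵒᵖ Z]
  [SMulCommClass R Rᵐᵒᵖ Z] [SMulCommClass Rᵐᵒᵖ R Z]

instance : SMulCommClass Rᵐᵒᵖ (TrivSqZeroExt R Z) (TrivSqZeroExt R Z) where
  smul_comm a s t := by
    refine TrivSqZeroExt.ext ?_ ?_
    · show (s.fst * t.fst) * a.unop = s.fst * (t.fst * a.unop)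
      rw [mul_assoc]
    · show a • (s.fst • t.snd + op t.fst • s.snd)
        = s.fst • (a • t.snd) + op (t.fst * a.unop) • s.snd
      rw [smul_add, smul_comm a s.fst t.snd]
      congr 1
      rw [MulOpposite.op_mul, MulOpposite.op_unop, mul_smul]

end TrivExtInst

end

end Paper


namespace MyAux

noncomputable section

open Paper MulOpposite TrivSqZeroExt CategoryTheory

variable {A X : Type} [Ring A] [AddCommGroup X] [Module A X] [Module Aᵐᵒᵖ X]
  [SMulCommClass A Aᵐᵒᵖ X] [SMulCommClass Aᵐᵒᵖ A X]

/-- The `A`-module structure on a `T`-module obtained via `inl : A → T`. -/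
def resMod (M : Type) [AddCommGroup M] [Module (TrivSqZeroExt A X) M] : Module A M :=
  Module.compHom M (TrivSqZeroExt.inlHom A X)

section Res

variable (M : Type) [AddCommGroup M] [Module (TrivSqZeroExt A X) M] [Module A M]
  (hM : ∀ (a : A) (m : M), a • m = (inl a : TrivSqZeroExt A X) • m)

/-- The structure map `σ : X ⊗_A M → M` of a restricted `T`-module,
`x ⊗ m ↦ inr x • m`. -/
def sigmaRes : Tens A X M →ₗ[A] M :=
  Tens.liftL
    { toFun := fun x =>
        { toFun := fun m => (inr x : TrivSqZeroExt A X) • m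
          map_zero' := smul_zero _
          map_add' := fun m m' => smul_add _ m m' }
      map_zero' := by
        ext m
        show (inr (0 : X) : TrivSqZeroExt A X) • m = 0
        rw [inr_zero, zero_smul]
      map_add' := fun x x' => by
        ext m
        show (inr (x + x') : TrivSqZeroExt A X) • m
          = (inr x : TrivSqZeroExt A X) • m + (inr x' : TrivSqZeroExt A X) • m
        rw [inr_add, add_smul] }
    (fun a x m => by
      show (inr (op a • x) : TrivSqZeroExt A X) • m = (inr x : TrivSqZeroExt A X) • (a • m)
      rw [hM, ← mul_smul, inr_mul_inl])
    (fun a x m => by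
      show (inr (a • x) : TrivSqZeroExt A X) • m = a • ((inr x : TrivSqZeroExt A X) • m)
      rw [hM, ← mul_smul, inl_mul_inr])

@[simp] theorem sigmaRes_mk (x : X) (m : M) :
    sigmaRes M hM (Tens.mk x m) = (inr x : TrivSqZeroExt A X) • m :=
  Tens.liftL_mk _ _ _ x m

theorem sigmaRes_nil (x : X) (z : Tens A X M) :
    sigmaRes M hM (Tens.mk x (sigmaRes M hM z)) = 0 := by
  rw [sigmaRes_mk]
  refine Tens.ind
    (motive := fun z => (inr x : TrivSqZeroExt A X) • sigmaRes M hM z = 0) ?_ ?_ ?_ z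
  · simp
  · intro x' m
    rw [sigmaRes_mk, ← mul_smul, inr_mul_inr, zero_smul]
  · intro u v hu hv
    rw [map_add, smul_add, hu, hv, add_zero]

end Res

/-- The pair associated to a `T`-module. -/
def resPair (M : ModuleCat.{0} (TrivSqZeroExt A X)) : PairMod A X := by
  letI : Module A M := resMod (A := A) (X := X) M
  have hM : ∀ (a : A) (m : (M : Type)), a • m = (inl a : TrivSqZeroExt A X) • m :=
    fun _ _ => rfl
  exact
    { carrier := M
      σ := sigmaRes (M : Type) hM
      nil := sigmaRes_nil (M : Type) hM }

/-- The restriction functor from `T`-modules to pairs. -/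
def F : ModuleCat.{0} (TrivSqZeroExt A X) ⥤ PairMod A X where
  obj := resPair
  map {M N} f :=
    { f :=
        letI : Module A M := resMod (A := A) (X := X) M
        letI : Module A N := resMod (A := A) (X := X) N
        { toFun := f
          map_add' := f.hom.map_add
          map_smul' := fun a m => f.hom.map_smul (inl a : TrivSqZeroExt A X) m }
      comm := fun x m => f.hom.map_smul (inr x : TrivSqZeroExt A X) m }
  map_id M := by apply PairHom.ext; rfl
  map_comp f g := by apply PairHom.ext; rfl

/-- The functor from pairs to `T`-modules. -/
def G : PairMod A X ⥤ ModuleCat.{0} (TrivSqZeroExt A X) where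
  obj P := P.toModuleCat
  map {P Q} f :=
    letI := P.toModule
    letI := Q.toModule
    ModuleCat.ofHom (X := P.carrier) (Y := Q.carrier)
      { toFun := f.f
        map_add' := f.f.map_add
        map_smul' := fun t m => by
          show f.f (t.fst • m + P.σ (Tens.mk t.snd m))
            = t.fst • f.f m + Q.σ (Tens.mk t.snd (f.f m))
          rw [map_add, f.f.map_smul, f.comm] }
  map_id P := rfl
  map_comp f g := rfl

/-- The unit of the equivalence, componentwise. -/
def unitApp (M : ModuleCat.{0} (TrivSqZeroExt A X)) :
    M ≅ (G (A := A) (X := X)).obj ((F (A := A) (X := X)).obj M) where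
  hom :=
    letI := (resPair M).toModule
    ModuleCat.ofHom (X := (M : Type)) (Y := (resPair M).carrier)
      { toFun := fun m => m
        map_add' := fun _ _ => rfl
        map_smul' := fun t m => by
          show t • m
            = (inl t.fst : TrivSqZeroExt A X) • m + (inr t.snd : TrivSqZeroExt A X) • m
          conv_lhs => rw [← inl_fst_add_inr_snd_eq t]
          rw [add_smul] }
  inv :=
    letI := (resPair M).toModule
    ModuleCat.ofHom (X := (resPair M).carrier) (Y := (M : Type))
      { toFun := fun m => m
        map_add' := fun _ _ => rfl
        map_smul' := fun t m => by
          have h : ∀ (m' : (M : Type)),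
              (t • m' : (M : Type)) = (inl t.fst : TrivSqZeroExt A X) • m'
                + (inr t.snd : TrivSqZeroExt A X) • m' := fun m' => by
            conv_lhs => rw [← inl_fst_add_inr_snd_eq t]
            rw [add_smul]
          exact (h m).symm }
  hom_inv_id := rfl
  inv_hom_id := rfl

/-- The counit of the equivalence, componentwise. -/
def counitApp (P : PairMod A X) :
    (F (A := A) (X := X)).obj ((G (A := A) (X := X)).obj P) ≅ P where
  hom :=
    { f :=
        { toFun := fun m => m
          map_add' := fun _ _ => rfl
          map_smul' := fun a m => by
            have h : ∀ (m' : P.carrier), a • m' + P.σ (Tens.mk (0 : X) m') = a • m' :=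
              fun m' => by rw [Tens.mk_zero_left, map_zero, add_zero]
            exact h m }
      comm := fun x m => by
        have h : ∀ (m' : P.carrier),
            (0 : A) • m' + P.σ (Tens.mk x m') = P.σ (Tens.mk x m') :=
          fun m' => by rw [zero_smul, zero_add]
        exact h m }
  inv :=
    { f :=
        { toFun := fun m => m
          map_add' := fun _ _ => rfl
          map_smul' := fun a m => by
            have h : ∀ (m' : P.carrier), a • m' + P.σ (Tens.mk (0 : X) m') = a • m' :=
              fun m' => by rw [Tens.mk_zero_left, map_zero, add_zero]
            exact (h m).symm }
      comm := fun x m => by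
        have h : ∀ (m' : P.carrier),
            (0 : A) • m' + P.σ (Tens.mk x m') = P.σ (Tens.mk x m') :=
          fun m' => by rw [zero_smul, zero_add]
        exact (h m).symm }
  hom_inv_id := by apply PairHom.ext; rfl
  inv_hom_id := by apply PairHom.ext; rfl

end

end MyAux

open CategoryTheory Paper in
/-- A left module over the trivial extension `T = A ⊕ X` is the same data as a pair
`(M, σ)` with `σ : X ⊗_A M → M` `A`-linear and `σ ∘ (Id_X ⊗ σ) = 0`: the category of
left `T`-modules is equivalent to the category of such pairs, the `T`-action on a pair
being `(a,x) • m = a • m + σ(x ⊗ m)`. -/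
theorem stmt_1 (A X : Type) [Ring A] [AddCommGroup X] [Module A X] [Module Aᵐᵒᵖ X]
    [SMulCommClass A Aᵐᵒᵖ X] [SMulCommClass Aᵐᵒᵖ A X] :
    ∃ E : ModuleCat.{0} (TrivSqZeroExt A X) ≌ PairMod A X,
      ∀ P : PairMod A X, Nonempty (E.inverse.obj P ≅ P.toModuleCat) := by
  refine ⟨CategoryTheory.Equivalence.mk MyAux.F MyAux.G
      (NatIso.ofComponents MyAux.unitApp (fun {M N} f => by apply ModuleCat.hom_ext; apply LinearMap.ext; intro m; rfl))
      (NatIso.ofComponents MyAux.counitApp (fun {P Q} f => by apply PairHom.ext; rfl)),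
    fun P => ⟨Iso.refl _⟩⟩
end

section
/- For any left T-module (M, σ), the sequence 0 → (X ⊗_A M, -Id_X ⊗ σ) → T ⊗_A M → (M, σ) → 0 is an exact sequence of T-modules, where the first map is (−σ, Id_{X⊗_A M})ᵗ : X ⊗_A M → M ⊕ (X ⊗_A M) ≅ T ⊗_A M and the second map is (Id_M, σ) : M ⊕ (X ⊗_A M) → M. Moreover this sequence is natural in (M, σ). -/
open MulOpposite

open CategoryTheory Paper in
/-- The natural short exact sequence
`0 → (X ⊗_A M, -Id_X ⊗ σ) → T ⊗_A M → (M, σ) → 0` of `T`-modules. -/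
theorem stmt_6 (A X : Type) [Ring A] [AddCommGroup X] [Module A X] [Module Aᵐᵒᵖ X]
    [SMulCommClass A Aᵐᵒᵖ X] [SMulCommClass Aᵐᵒᵖ A X] (P : PairMod A X) :
    ∃ (i : (XF A X).obj ((PMS A X).obj P) ⟶ (TF A X).obj (ModuleCat.of A P.carrier))
      (p : (TF A X).obj (ModuleCat.of A P.carrier) ⟶ P),
      (∀ u : Tens A X P.carrier, PairHom.f i u = (-(P.σ u), u)) ∧
      (∀ q : P.carrier × Tens A X P.carrier, PairHom.f p q = q.1 + P.σ q.2) ∧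
      Function.Injective (PairHom.f i) ∧
      Function.Surjective (PairHom.f p) ∧
      Function.Exact (PairHom.f i) (PairHom.f p) ∧
      -- naturality in `(M, σ)`:
      (∀ (Q : PairMod A X) (g : P ⟶ Q) (u : Tens A X P.carrier),
        PairHom.f ((TF A X).map ((resF A X).map g)) (PairHom.f i u) =
          (-(Q.σ (PairHom.f ((XF A X).map ((PMS A X).map g)) u)),
            PairHom.f ((XF A X).map ((PMS A X).map g)) u)) ∧
      (∀ (Q : PairMod A X) (g : P ⟶ Q) (q : P.carrier × Tens A X P.carrier),
        PairHom.f g (q.1 + P.σ q.2) =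
          PairHom.f g q.1 + Q.σ (Tens.mapRight (B := A) (PairHom.f g) q.2)) := by
    classical
  refine ⟨⟨LinearMap.prod (-P.σ) LinearMap.id, ?_⟩,
    ⟨LinearMap.coprod LinearMap.id P.σ, ?_⟩, ?_, ?_, ?_, ?_, ?_, ?_, ?_⟩
  · -- comm of i
    intro x m
    show LinearMap.prod (-P.σ) LinearMap.id
        (Tens.mapRight (B := A) (-P.σ) (Tens.mk x m)) =
      tau A X P.carrier (Tens.mk x (LinearMap.prod (-P.σ) LinearMap.id m))
    erw [Tens.mapRight_mk, tau_mk]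
    refine Prod.ext ?_ rfl
    show -(P.σ (Tens.mk x ((-P.σ) m))) = 0
    erw [LinearMap.neg_apply, Tens.mk_neg_right, map_neg, P.nil, neg_zero, neg_zero]
  · -- comm of p
    intro x q
    show LinearMap.coprod LinearMap.id P.σ (tau A X P.carrier (Tens.mk x q)) =
      P.σ (Tens.mk x (LinearMap.coprod LinearMap.id P.σ q))
    erw [tau_mk]
    erw [LinearMap.coprod_apply, LinearMap.coprod_apply]
    simp only [LinearMap.id_coe, id_eq]
    rw [Tens.mk_add_right, map_add, P.nil, add_zero, zero_add]
  · -- formula for i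
    intro u
    rfl
  · -- formula for p
    intro q
    rfl
  · -- injectivity
    intro u v h
    exact congrArg Prod.snd h
  · -- surjectivity
    intro m
    refine ⟨(m, 0), ?_⟩
    show m + P.σ 0 = m
    rw [map_zero, add_zero]
  · -- exactness
    intro q
    constructor
    · intro h
      refine ⟨q.2, Prod.ext ?_ rfl⟩
      show -(P.σ q.2) = q.1
      have h' : (LinearMap.coprod LinearMap.id P.σ) q = 0 := h
      erw [LinearMap.coprod_apply] at h'
      simp only [LinearMap.id_coe, id_eq] at h'
      exact (eq_neg_of_add_eq_zero_left h').symm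
    · rintro ⟨u, rfl⟩
      show -(P.σ u) + P.σ u = 0
      rw [neg_add_cancel]
  · -- naturality 1
    intro Q g u
    show (LinearMap.prodMap g.f (Tens.mapRight (B := A) g.f))
        (LinearMap.prod (-P.σ) LinearMap.id u) =
      (-(Q.σ (Tens.mapRight (B := A) g.f u)), Tens.mapRight (B := A) g.f u)
    refine Prod.ext ?_ rfl
    show g.f (-(P.σ u)) = -(Q.σ (Tens.mapRight (B := A) g.f u))
    rw [map_neg, PairHom.comm']
  · -- naturality 2
    intro Q g q
    rw [map_add, PairHom.comm']
end

section
/- Let T = A ⊕ X be a trivial extension of a ring A with X projective as a right A-module, and suppose A has finite left global dimension. If M is a left T-module whose underlying A-module has finite projective dimension over A, then M has finite projective dimension over T if and only if the T-module (X ⊗_A M, -Id_X ⊗ σ) has finite projective dimension over T. -/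
open MulOpposite

namespace PDLemmas

open CategoryTheory Paper

variable {R : Type} [Ring R]

theorem projective_of_module {M : Type} [AddCommGroup M] [Module R M]
    (h : Module.Projective R M) : Projective (ModuleCat.of R M) :=
  (IsProjective.iff_projective (R := R) (P := M)).mp h

theorem module_of_projective {M : Type} [AddCommGroup M] [Module R M]
    (h : Projective (ModuleCat.of R M)) : Module.Projective R M :=
  (IsProjective.iff_projective (R := R) (P := M)).mpr h

theorem projective_punit : Projective (ModuleCat.of R PUnit.{1}) := by
  apply projective_of_module
  exact Module.Projective.of_basis (Module.Basis.empty (ι := Empty) _)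

theorem pd_of_projective {M : ModuleCat.{0} R} (h : Projective M) :
    ∀ n, ProjDimLE R n M
  | 0 => h
  | (n+1) => Or.inl h

theorem pd_succ_of_pd {n : ℕ} : ∀ {M : ModuleCat.{0} R},
    ProjDimLE R n M → ProjDimLE R (n+1) M := by
  induction n with
  | zero => exact fun h => Or.inl h
  | succ n ih =>
    rintro M (h | ⟨P, K, i, p, h1, h2, h3, h4, h5⟩)
    · exact Or.inl h
    · exact Or.inr ⟨P, K, i, p, h1, h2, h3, h4, ih h5⟩

theorem pd_mono {n m : ℕ} (h : n ≤ m) {M : ModuleCat.{0} R}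
    (hM : ProjDimLE R n M) : ProjDimLE R m M := by
  induction m with
  | zero => exact Nat.le_zero.mp h ▸ hM
  | succ m ih =>
    rcases Nat.lt_or_ge n (m+1) with h' | h'
    · exact pd_succ_of_pd (ih (Nat.lt_succ_iff.mp h'))
    · exact (Nat.le_antisymm h h') ▸ hM

theorem projective_of_equiv {M N : ModuleCat.{0} R} (e : M.carrier ≃ₗ[R] N.carrier)
    (h : Projective M) : Projective N := by
  have hm : Module.Projective R M.carrier := module_of_projective h
  exact projective_of_module (Module.Projective.of_equiv e)

theorem pd_equiv {M N : ModuleCat.{0} R} (e : M.carrier ≃ₗ[R] N.carrier) {n : ℕ}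
    (h : ProjDimLE R n M) : ProjDimLE R n N := by
  cases n with
  | zero => exact projective_of_equiv e h
  | succ n =>
    rcases h with h | ⟨P, K, i, p, h1, h2, h3, h4, h5⟩
    · exact Or.inl (projective_of_equiv e h)
    · refine Or.inr ⟨P, K, i, ModuleCat.ofHom (e.toLinearMap.comp p.hom), h1, h2,
        e.surjective.comp h3, ?_, h5⟩
      intro y
      constructor
      · intro hy
        have : e (p y) = 0 := hy
        have : p y = 0 := by
          have := congrArg e.symm this
          simpa using this
        exact (h4 y).mp this
      · intro hy
        have : p y = 0 := (h4 y).mpr hy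
        show e (p y) = 0
        rw [this, map_zero]

theorem exact_ker_subtype {N P : Type} [AddCommGroup N] [Module R N]
    [AddCommGroup P] [Module R P] (g : N →ₗ[R] P) :
    Function.Exact ((LinearMap.ker g).subtype) g := by
  intro y
  constructor
  · intro hy
    exact ⟨⟨y, hy⟩, rfl⟩
  · rintro ⟨x, rfl⟩
    exact x.2

theorem exists_pres (M : ModuleCat.{0} R) :
    ∃ (P K : ModuleCat.{0} R) (i : K ⟶ P) (p : P ⟶ M),
      Projective P ∧ Function.Injective i ∧ Function.Surjective p ∧ Function.Exact i p := by
  let p0 : (M.carrier →₀ R) →ₗ[R] M.carrier := Finsupp.linearCombination R _root_.id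
  have hsurj : Function.Surjective p0 := Finsupp.linearCombination_id_surjective R M.carrier
  let P : ModuleCat.{0} R := ModuleCat.of R (M.carrier →₀ R)
  let p : P ⟶ M := ModuleCat.ofHom p0
  refine ⟨P, ModuleCat.of R (LinearMap.ker p0), ModuleCat.ofHom (LinearMap.ker p0).subtype, p, ?_, ?_, hsurj, ?_⟩
  · exact projective_of_module (Module.Projective.of_basis
      (Finsupp.basisSingleOne (ι := M.carrier) (R := R)))
  · exact Subtype.val_injective
  · exact exact_ker_subtype p0

theorem pd_succ_iff {n : ℕ} {M : ModuleCat.{0} R} :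
    ProjDimLE R (n+1) M ↔
    ∃ (P K : ModuleCat.{0} R) (i : K ⟶ P) (p : P ⟶ M),
      Projective P ∧ Function.Injective i ∧ Function.Surjective p ∧
      Function.Exact i p ∧ ProjDimLE R n K := by
  constructor
  · rintro (h | h)
    · refine ⟨M, ModuleCat.of R PUnit.{1}, 0, 𝟙 M, h, ?_, fun y => ⟨y, rfl⟩, ?_,
        pd_of_projective projective_punit n⟩
      · intro a b _; exact Subsingleton.elim a b
      · intro y
        constructor
        · intro hy
          refine ⟨0, ?_⟩
          have h0 : (0 : ModuleCat.of R PUnit.{1} ⟶ M) 0 = 0 := rfl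
          rw [h0]
          have : (𝟙 M) y = y := rfl
          rw [this] at hy
          exact hy.symm
        · rintro ⟨x, hx⟩
          have h0 : (0 : ModuleCat.of R PUnit.{1} ⟶ M) x = 0 := rfl
          rw [h0] at hx
          show (𝟙 M) y = 0
          have : (𝟙 M) y = y := rfl
          rw [this, ← hx]
    · exact h
  · exact Or.inr

theorem exact_prodMap {A B C A' B' C' : Type}
    [AddCommGroup A] [Module R A] [AddCommGroup B] [Module R B] [AddCommGroup C] [Module R C]
    [AddCommGroup A'] [Module R A'] [AddCommGroup B'] [Module R B'] [AddCommGroup C'] [Module R C']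
    {f : A →ₗ[R] B} {g : B →ₗ[R] C} {f' : A' →ₗ[R] B'} {g' : B' →ₗ[R] C'}
    (h : Function.Exact f g) (h' : Function.Exact f' g') :
    Function.Exact (f.prodMap f') (g.prodMap g') := by
  intro y
  constructor
  · intro hy
    have h1 : g y.1 = 0 := congrArg Prod.fst hy
    have h2 : g' y.2 = 0 := congrArg Prod.snd hy
    obtain ⟨x1, hx1⟩ := (h y.1).mp h1
    obtain ⟨x2, hx2⟩ := (h' y.2).mp h2
    exact ⟨(x1, x2), Prod.ext hx1 hx2⟩
  · rintro ⟨⟨x1, x2⟩, rfl⟩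
    exact Prod.ext (h.apply_apply_eq_zero x1) (h'.apply_apply_eq_zero x2)

theorem projective_prod {M N : Type} [AddCommGroup M] [Module R M] [AddCommGroup N] [Module R N]
    (hM : Projective (ModuleCat.of R M)) (hN : Projective (ModuleCat.of R N)) :
    Projective (ModuleCat.of R (M × N)) := by
  have h1 : Module.Projective R M := module_of_projective hM
  have h2 : Module.Projective R N := module_of_projective hN
  exact projective_of_module inferInstance

theorem pd_prod {n : ℕ} : ∀ {M N : Type} [AddCommGroup M] [Module R M]
    [AddCommGroup N] [Module R N],
    ProjDimLE R n (ModuleCat.of R M) → ProjDimLE R n (ModuleCat.of R N) →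
    ProjDimLE R n (ModuleCat.of R (M × N)) := by
  induction n with
  | zero => exact fun hM hN => projective_prod hM hN
  | succ n ih =>
    intro M N _ _ _ _ hM hN
    obtain ⟨P1, K1, i1, p1, a1, b1, c1, d1, e1⟩ := pd_succ_iff.mp hM
    obtain ⟨P2, K2, i2, p2, a2, b2, c2, d2, e2⟩ := pd_succ_iff.mp hN
    refine pd_succ_iff.mpr ⟨ModuleCat.of R (P1.carrier × P2.carrier),
      ModuleCat.of R (K1.carrier × K2.carrier),
      ModuleCat.ofHom (i1.hom.prodMap i2.hom),
      (ModuleCat.ofHom ((p1.hom : P1.carrier →ₗ[R] M).prodMap p2.hom) :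
        ModuleCat.of R (P1.carrier × P2.carrier) ⟶ ModuleCat.of R (M × N)),
      projective_prod a1 a2, ?_, ?_, exact_prodMap d1 d2, ih e1 e2⟩
    · exact Function.Injective.prodMap b1 b2
    · exact Function.Surjective.prodMap c1 c2

theorem exists_section {P M : ModuleCat.{0} R} (hM : Projective M) (p : P ⟶ M)
    (hp : Function.Surjective p) : ∃ s : M ⟶ P, ∀ m, p (s m) = m := by
  have : Epi p := (ModuleCat.epi_iff_surjective p).mpr hp
  refine ⟨Projective.factorThru (𝟙 M) p, fun m => ?_⟩
  show p ((Projective.factorThru (𝟙 M) p) m) = m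
  exact congrArg (fun g => g m) (Projective.factorThru_comp (𝟙 M) p)

theorem split_equiv {K P M : ModuleCat.{0} R} (i : K ⟶ P) (p : P ⟶ M) (s : M ⟶ P)
    (hi : Function.Injective i) (hex : Function.Exact i p) (hs : ∀ m, p (s m) = m) :
    Nonempty ((K.carrier × M.carrier) ≃ₗ[R] P.carrier) := by
  refine ⟨LinearEquiv.ofBijective (LinearMap.coprod i.hom s.hom) ⟨?_, ?_⟩⟩
  · intro x y hxy
    have hxy' : i x.1 + s x.2 = i y.1 + s y.2 := hxy
    have h2 : x.2 = y.2 := by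
      have := congrArg p hxy'
      simpa [hex.apply_apply_eq_zero, hs] using this
    have h1 : x.1 = y.1 := by
      apply hi
      have : i x.1 = i y.1 := by
        have := hxy'
        rw [h2] at this
        exact add_right_cancel this
      exact this
    exact Prod.ext h1 h2
  · intro x
    have hx : p (x - s (p x)) = 0 := by simp [map_sub, hs]
    obtain ⟨k, hk⟩ := (hex _).mp hx
    refine ⟨(k, p x), ?_⟩
    show i k + s (p x) = x
    rw [hk]
    abel

/-- Pullback construction with kernel presentations on both sides. -/
theorem pullback_con {P Q M K L : ModuleCat.{0} R} (p : P ⟶ M) (q : Q ⟶ M)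
    (i : K ⟶ P) (j : L ⟶ Q)
    (hpsurj : Function.Surjective p) (hqsurj : Function.Surjective q)
    (hiinj : Function.Injective i) (hjinj : Function.Injective j)
    (hexi : Function.Exact i p) (hexj : Function.Exact j q) :
    ∃ (D : ModuleCat.{0} R) (π₁ : D ⟶ P) (π₂ : D ⟶ Q) (κ : K ⟶ D) (lam : L ⟶ D),
      Function.Surjective π₁ ∧ Function.Surjective π₂ ∧
      Function.Injective κ ∧ Function.Injective lam ∧
      Function.Exact κ π₂ ∧ Function.Exact lam π₁ := by
  let S : Submodule R (P.carrier × Q.carrier) :=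
    LinearMap.ker (p.hom.comp (LinearMap.fst R P.carrier Q.carrier) -
      q.hom.comp (LinearMap.snd R P.carrier Q.carrier))
  have memS : ∀ x : P.carrier × Q.carrier, x ∈ S ↔ p x.1 = q x.2 := by
    intro x
    simp only [S, LinearMap.mem_ker, LinearMap.sub_apply, LinearMap.comp_apply,
      LinearMap.fst_apply, LinearMap.snd_apply, sub_eq_zero]
  let D : ModuleCat.{0} R := ModuleCat.of R S
  let π₁ : D ⟶ P := ModuleCat.ofHom ((LinearMap.fst R P.carrier Q.carrier).comp S.subtype)
  let π₂ : D ⟶ Q := ModuleCat.ofHom ((LinearMap.snd R P.carrier Q.carrier).comp S.subtype)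
  let κ : K ⟶ D := ModuleCat.ofHom <| LinearMap.codRestrict S
    (LinearMap.prod i.hom 0)
    (fun k => by
      rw [memS]
      show p (i k) = q 0
      rw [hexi.apply_apply_eq_zero, map_zero])
  let lam : L ⟶ D := ModuleCat.ofHom <| LinearMap.codRestrict S
    (LinearMap.prod 0 j.hom)
    (fun l => by
      rw [memS]
      show p 0 = q (j l)
      rw [hexj.apply_apply_eq_zero, map_zero])
  refine ⟨D, π₁, π₂, κ, lam, ?_, ?_, ?_, ?_, ?_, ?_⟩
  · intro x
    obtain ⟨y, hy⟩ := hqsurj (p x)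
    exact ⟨⟨(x, y), (memS _).mpr hy.symm⟩, rfl⟩
  · intro y
    obtain ⟨x, hx⟩ := hpsurj (q y)
    exact ⟨⟨(x, y), (memS _).mpr hx⟩, rfl⟩
  · intro a b hab
    apply hiinj
    exact congrArg Prod.fst (congrArg Subtype.val hab)
  · intro a b hab
    apply hjinj
    exact congrArg Prod.snd (congrArg Subtype.val hab)
  · intro y
    obtain ⟨⟨y1, y2⟩, hmem⟩ := y
    constructor
    · intro hy
      have h2 : y2 = 0 := hy
      have h1 : p y1 = 0 := by
        have hm := (memS _).mp hmem
        rw [h2, map_zero] at hm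
        exact hm
      obtain ⟨k, hk⟩ := (hexi _).mp h1
      refine ⟨k, ?_⟩
      apply Subtype.ext
      exact Prod.ext hk h2.symm
    · rintro ⟨k, hk⟩
      rw [← hk]
      rfl
  · intro y
    obtain ⟨⟨y1, y2⟩, hmem⟩ := y
    constructor
    · intro hy
      have h1 : y1 = 0 := hy
      have h2 : q y2 = 0 := by
        have hm := (memS _).mp hmem
        rw [h1, map_zero] at hm
        exact hm.symm
      obtain ⟨l, hl⟩ := (hexj _).mp h2
      refine ⟨l, ?_⟩
      apply Subtype.ext
      exact Prod.ext h1.symm hl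
    · rintro ⟨l, hl⟩
      rw [← hl]
      rfl

theorem schanuel {P Q M K L : ModuleCat.{0} R} (p : P ⟶ M) (q : Q ⟶ M)
    (i : K ⟶ P) (j : L ⟶ Q) (hP : Projective P) (hQ : Projective Q)
    (hpsurj : Function.Surjective p) (hqsurj : Function.Surjective q)
    (hiinj : Function.Injective i) (hjinj : Function.Injective j)
    (hexi : Function.Exact i p) (hexj : Function.Exact j q) :
    Nonempty ((K.carrier × Q.carrier) ≃ₗ[R] (L.carrier × P.carrier)) := by
  obtain ⟨D, π₁, π₂, κ, lam, s1, s2, i1, i2, e1, e2⟩ :=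
    pullback_con p q i j hpsurj hqsurj hiinj hjinj hexi hexj
  obtain ⟨sQ, hsQ⟩ := exists_section hQ π₂ s2
  obtain ⟨sP, hsP⟩ := exists_section hP π₁ s1
  obtain ⟨eK⟩ := split_equiv κ π₂ sQ i1 e1 hsQ
  obtain ⟨eL⟩ := split_equiv lam π₁ sP i2 e2 hsP
  exact ⟨eK.trans eL.symm⟩

theorem projective_summand {M N : Type} [AddCommGroup M] [Module R M]
    [AddCommGroup N] [Module R N]
    (h : Projective (ModuleCat.of R (M × N))) : Projective (ModuleCat.of R M) := by
  have hp : Module.Projective R (M × N) := module_of_projective h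
  exact projective_of_module (Module.Projective.of_split
    (LinearMap.inl R M N) (LinearMap.fst R M N) (by ext x <;> rfl))

set_option maxHeartbeats 1000000 in
theorem pd_summand {n : ℕ} : ∀ {M N : Type} [AddCommGroup M] [Module R M]
    [AddCommGroup N] [Module R N],
    ProjDimLE R n (ModuleCat.of R (M × N)) → ProjDimLE R n (ModuleCat.of R M) := by
  induction n with
  | zero => exact fun h => projective_summand h
  | succ n ih =>
    intro M N _ _ _ _ h
    obtain ⟨P, K, i, p, hP, hiinj, hpsurj, hexi, hK⟩ := pd_succ_iff.mp h
    obtain ⟨F1, K1, i1, p1, a1, b1, c1, d1⟩ := exists_pres (ModuleCat.of R M)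
    obtain ⟨F2, K2, i2, p2, a2, b2, c2, d2⟩ := exists_pres (ModuleCat.of R N)
    let prodP : ModuleCat.of R (F1.carrier × F2.carrier) ⟶ ModuleCat.of R (M × N) :=
      ModuleCat.ofHom (LinearMap.prodMap (p1.hom : F1.carrier →ₗ[R] M) (p2.hom : F2.carrier →ₗ[R] N))
    let prodI : ModuleCat.of R (K1.carrier × K2.carrier) ⟶ ModuleCat.of R (F1.carrier × F2.carrier) :=
      ModuleCat.ofHom (LinearMap.prodMap i1.hom i2.hom)
    have hexprod : Function.Exact prodI prodP := exact_prodMap d1 d2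
    have hsurjprod : Function.Surjective prodP := Function.Surjective.prodMap c1 c2
    have hinjprod : Function.Injective prodI := Function.Injective.prodMap b1 b2
    obtain ⟨e⟩ := schanuel prodP p prodI i (projective_prod a1 a2) hP
      hsurjprod hpsurj hinjprod hiinj hexprod hexi
    have hRHS : ProjDimLE R n (ModuleCat.of R (K.carrier × (F1.carrier × F2.carrier))) :=
      pd_prod hK (pd_of_projective (projective_prod a1 a2) n)
    have hLHS : ProjDimLE R n (ModuleCat.of R ((K1.carrier × K2.carrier) × P.carrier)) :=
      pd_equiv e.symm hRHS
    have h1 : ProjDimLE R n (ModuleCat.of R (K1.carrier × K2.carrier)) := ih hLHS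
    have h2 : ProjDimLE R n (ModuleCat.of R K1.carrier) := ih h1
    exact pd_succ_iff.mpr ⟨F1, K1, i1, p1, a1, b1, c1, d1, h2⟩

set_option maxHeartbeats 1600000 in
/-- Joint induction: S3 (quotient bound) and S4 (middle bound). -/
theorem S34 : ∀ t : ℕ,
    (∀ n m, n + m = t → ∀ (K Q M : ModuleCat.{0} R) (i : K ⟶ Q) (p : Q ⟶ M),
      Function.Injective i → Function.Surjective p → Function.Exact i p →
      ProjDimLE R n Q → ProjDimLE R m K → ProjDimLE R (max n (m+1)) M) ∧
    (∀ a c, a + c = t → ∀ (A B C : ModuleCat.{0} R) (i : A ⟶ B) (p : B ⟶ C),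
      Function.Injective i → Function.Surjective p → Function.Exact i p →
      ProjDimLE R a A → ProjDimLE R c C → ProjDimLE R (max a c) B) := by
  intro t
  induction t using Nat.strong_induction_on with
  | _ t IH =>
  constructor
  · -- S3
    intro n m hnm K Q M i p hiinj hpsurj hexi hQ hK
    by_cases hQproj : Projective Q
    · exact pd_mono (le_max_right _ _) (pd_succ_iff.mpr ⟨Q, K, i, p, hQproj, hiinj, hpsurj, hexi, hK⟩)
    · match n, hQ with
      | 0, hQ => exact absurd hQ hQproj
      | (n'+1), Or.inl hQ => exact absurd hQ hQproj
      | (n'+1), Or.inr ⟨F, Q', j, f, hF, hjinj, hfsurj, hexj, hQ'⟩ =>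
        -- composite surjection F → M with kernel K''
        let pf : F ⟶ M := ModuleCat.ofHom (p.hom.comp f.hom)
        have hpfsurj : Function.Surjective pf := hpsurj.comp hfsurj
        let K'' : ModuleCat.{0} R := ModuleCat.of R (LinearMap.ker pf.hom)
        let incl : K'' ⟶ F := ModuleCat.ofHom (LinearMap.ker pf.hom).subtype
        have hexincl : Function.Exact incl pf := exact_ker_subtype pf.hom
        -- map Q' → K''
        let jmap : Q' ⟶ K'' := ModuleCat.ofHom <| LinearMap.codRestrict (LinearMap.ker pf.hom)
          j.hom
          (fun q' => by
            show p (f (j q')) = 0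
            rw [hexj.apply_apply_eq_zero, map_zero])
        -- map K'' → K
        have hrange : ∀ x : LinearMap.ker pf.hom, f x.1 ∈ LinearMap.range i.hom := by
          intro x
          have hx : p (f x.1) = 0 := x.2
          obtain ⟨k, hk⟩ := (hexi _).mp hx
          exact ⟨k, hk⟩
        let δ : K'' →ₗ[R] LinearMap.range i.hom :=
          LinearMap.codRestrict (LinearMap.range i.hom)
            (f.hom.comp (LinearMap.ker pf.hom).subtype) hrange
        let eI := LinearEquiv.ofInjective i.hom hiinj
        let φ : K'' ⟶ K := ModuleCat.ofHom ((eI.symm.toLinearMap).comp δ)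
        have hiφ : ∀ x : LinearMap.ker pf.hom, i (φ x) = f x.1 := by
          intro x
          exact LinearEquiv.ofInjective_symm_apply
            (f := i.hom) (h := hiinj) (δ x)
        have hφsurj : Function.Surjective φ := by
          intro k
          obtain ⟨x, hx⟩ := hfsurj (i k)
          have hxker : pf x = 0 := by
            show p (f x) = 0
            rw [hx, hexi.apply_apply_eq_zero]
          refine ⟨⟨x, hxker⟩, hiinj ?_⟩
          rw [hiφ]
          exact hx
        have hjmapinj : Function.Injective jmap := by
          intro a b hab
          exact hjinj (congrArg Subtype.val hab)
        have hexφ : Function.Exact jmap φ := by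
          intro x
          constructor
          · intro hx
            have : f x.1 = 0 := by
              rw [← hiφ x, hx, map_zero]
            obtain ⟨q', hq'⟩ := (hexj _).mp this
            exact ⟨q', Subtype.ext hq'⟩
          · rintro ⟨q', rfl⟩
            apply hiinj
            rw [hiφ, map_zero]
            show f (j q') = 0
            rw [hexj.apply_apply_eq_zero]
        -- apply S4 at level n' + m
        have hS4 := (IH (n' + m) (by omega)).2 n' m rfl Q' K'' K jmap φ
          hjmapinj hφsurj hexφ hQ' hK
        have : ProjDimLE R ((max n' m) + 1) M :=
          pd_succ_iff.mpr ⟨F, K'', incl, pf, hF, Subtype.val_injective, hpfsurj, hexincl, hS4⟩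
        exact pd_mono (by omega) this
  · -- S4
    intro a c hac A B C i p hiinj hpsurj hexi hA hC
    by_cases hCproj : Projective C
    · obtain ⟨s, hs⟩ := exists_section hCproj p hpsurj
      obtain ⟨e⟩ := split_equiv i p s hiinj hexi hs
      exact pd_equiv e (pd_prod (pd_mono (le_max_left _ _) hA)
        (pd_mono (le_max_right _ _) (pd_of_projective hCproj _)))
    · match c, hC with
      | 0, hC => exact absurd hC hCproj
      | (c'+1), Or.inl hC => exact absurd hC hCproj
      | (c'+1), Or.inr ⟨F, C', j, f, hF, hjinj, hfsurj, hexj, hC'⟩ =>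
        obtain ⟨D, π₁, π₂, κ, lam, s1, s2, i1, i2, e1, e2⟩ :=
          pullback_con p f i j hpsurj hfsurj hiinj hjinj hexi hexj
        obtain ⟨sF, hsF⟩ := exists_section hF π₂ s2
        obtain ⟨eD⟩ := split_equiv κ π₂ sF i1 e1 hsF
        have hD : ProjDimLE R a D :=
          pd_equiv eD (pd_prod hA (pd_of_projective hF a))
        have hS3 := (IH (a + c') (by omega)).1 a c' rfl C' D B lam π₁
          i2 s1 e2 hD hC'
        exact hS3
  
theorem S3 {n m : ℕ} {K Q M : ModuleCat.{0} R} (i : K ⟶ Q) (p : Q ⟶ M)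
    (hiinj : Function.Injective i) (hpsurj : Function.Surjective p)
    (hexi : Function.Exact i p) (hQ : ProjDimLE R n Q) (hK : ProjDimLE R m K) :
    ProjDimLE R (max n (m+1)) M :=
  (S34 (n+m)).1 n m rfl K Q M i p hiinj hpsurj hexi hQ hK

theorem S4 {a c : ℕ} {A B C : ModuleCat.{0} R} (i : A ⟶ B) (p : B ⟶ C)
    (hiinj : Function.Injective i) (hpsurj : Function.Surjective p)
    (hexi : Function.Exact i p) (hA : ProjDimLE R a A) (hC : ProjDimLE R c C) :
    ProjDimLE R (max a c) B :=
  (S34 (a+c)).2 a c rfl A B C i p hiinj hpsurj hexi hA hC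

theorem pd_ker {K Q M : ModuleCat.{0} R} (i : K ⟶ Q) (p : Q ⟶ M)
    (hiinj : Function.Injective i) (hpsurj : Function.Surjective p)
    (hexi : Function.Exact i p) {n : ℕ} (hQ : ProjDimLE R n Q)
    (hM : FinProjDim R M) : FinProjDim R K := by
  obtain ⟨m, hm⟩ := hM
  by_cases hMproj : Projective M
  · obtain ⟨s, hs⟩ := exists_section hMproj p hpsurj
    obtain ⟨e⟩ := split_equiv i p s hiinj hexi hs
    exact ⟨n, pd_summand (pd_equiv e.symm hQ)⟩
  · match m, hm with
    | 0, hm => exact absurd hm hMproj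
    | (m'+1), Or.inl hm => exact absurd hm hMproj
    | (m'+1), Or.inr ⟨F, M', j, f, hF, hjinj, hfsurj, hexj, hM'⟩ =>
      obtain ⟨D, π₁, π₂, κ, lam, s1, s2, i1, i2, e1, e2⟩ :=
        pullback_con p f i j hpsurj hfsurj hiinj hjinj hexi hexj
      obtain ⟨sF, hsF⟩ := exists_section hF π₂ s2
      obtain ⟨eD⟩ := split_equiv κ π₂ sF i1 e1 hsF
      have hD : ProjDimLE R (max m' n) D := S4 lam π₁ i2 s1 e2 hM' hQ
      exact ⟨max m' n, pd_summand (pd_equiv eD.symm hD)⟩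

theorem finProjDim_iff_of_ses {K Q M : ModuleCat.{0} R} (i : K ⟶ Q) (p : Q ⟶ M)
    (hiinj : Function.Injective i) (hpsurj : Function.Surjective p)
    (hexi : Function.Exact i p) (hQ : FinProjDim R Q) :
    FinProjDim R M ↔ FinProjDim R K := by
  obtain ⟨n, hn⟩ := hQ
  constructor
  · exact fun hM => pd_ker i p hiinj hpsurj hexi hn hM
  · rintro ⟨m, hm⟩
    exact ⟨max n (m+1), S3 i p hiinj hpsurj hexi hn hm⟩

end PDLemmas


namespace TensFlat

open Paper MulOpposite CategoryTheory

noncomputable section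

section Flat

variable {A : Type} [Ring A] {X : Type} [AddCommGroup X] [Module A X] [Module Aᵐᵒᵖ X]
  [SMulCommClass A Aᵐᵒᵖ X] [SMulCommClass Aᵐᵒᵖ A X]

/-- `Tens.mk` as an additive hom in the left variable. -/
def mkL {N : Type} [AddCommGroup N] [Module A N] (n : N) : X →+ Tens A X N where
  toFun x := Tens.mk x n
  map_zero' := Tens.mk_zero_left n
  map_add' x x' := Tens.mk_add_left x x' n

/-- `Tens.mk` as an additive hom in the right variable. -/
def mkR {N : Type} [AddCommGroup N] [Module A N] (x : X) : N →+ Tens A X N where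
  toFun n := Tens.mk x n
  map_zero' := Tens.mk_zero_right x
  map_add' n n' := Tens.mk_add_right x n n'

/-- The biadditive comparison map underlying `theta`. -/
def thetaF (s : X →ₗ[Aᵐᵒᵖ] (X →₀ Aᵐᵒᵖ)) {N : Type} [AddCommGroup N] [Module A N] :
    X →+ N →+ (X →₀ N) where
  toFun x :=
    { toFun := fun n => (s x).sum fun y a => Finsupp.single y (a.unop • n)
      map_zero' := by
        show ((s x).sum fun y a => Finsupp.single y (a.unop • (0 : N))) = 0
        apply Finset.sum_eq_zero
        intro y _
        show Finsupp.single y (((s x) y).unop • (0 : N)) = 0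
        rw [smul_zero, Finsupp.single_zero]
      map_add' := fun n n' => by
        show ((s x).sum fun y a => Finsupp.single y (a.unop • (n + n'))) =
          ((s x).sum fun y a => Finsupp.single y (a.unop • n)) +
          ((s x).sum fun y a => Finsupp.single y (a.unop • n'))
        rw [Finsupp.sum, Finsupp.sum, Finsupp.sum, ← Finset.sum_add_distrib]
        apply Finset.sum_congr rfl
        intro y _
        rw [smul_add, Finsupp.single_add] }
  map_zero' := by
    apply AddMonoidHom.ext
    intro n
    show ((s 0).sum fun y a => Finsupp.single y (a.unop • n)) = 0
    rw [map_zero, Finsupp.sum_zero_index]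
  map_add' := fun x x' => by
    apply AddMonoidHom.ext
    intro n
    show ((s (x + x')).sum fun y a => Finsupp.single y (a.unop • n)) =
      ((s x).sum fun y a => Finsupp.single y (a.unop • n)) +
      ((s x').sum fun y a => Finsupp.single y (a.unop • n))
    rw [map_add, Finsupp.sum_add_index'
      (fun y => by
        show Finsupp.single y ((0 : Aᵐᵒᵖ).unop • n) = 0
        rw [MulOpposite.unop_zero, zero_smul, Finsupp.single_zero])
      (fun y b₁ b₂ => by
        show Finsupp.single y ((b₁ + b₂).unop • n) =
          Finsupp.single y (b₁.unop • n) + Finsupp.single y (b₂.unop • n)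
        rw [MulOpposite.unop_add, add_smul, Finsupp.single_add])]

theorem thetaF_bal (s : X →ₗ[Aᵐᵒᵖ] (X →₀ Aᵐᵒᵖ)) {N : Type} [AddCommGroup N] [Module A N] :
    ∀ (a : A) (x : X) (n : N), thetaF s (op a • x) n = thetaF s x (a • n) := by
  intro a x n
  show ((s (op a • x)).sum fun y b => Finsupp.single y (b.unop • n)) =
    ((s x).sum fun y b => Finsupp.single y (b.unop • (a • n)))
  rw [map_smul, Finsupp.sum_smul_index'
    (fun y => by rw [MulOpposite.unop_zero, zero_smul, Finsupp.single_zero])]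
  apply Finsupp.sum_congr
  intro y _
  rw [smul_eq_mul, MulOpposite.unop_mul, MulOpposite.unop_op, mul_smul]

/-- The comparison map `X ⊗_A N → X →₀ N` induced by a section `s` of the free cover of `X`. -/
def theta (s : X →ₗ[Aᵐᵒᵖ] (X →₀ Aᵐᵒᵖ)) {N : Type} [AddCommGroup N] [Module A N] :
    Tens A X N →+ (X →₀ N) :=
  Tens.lift (thetaF s) (thetaF_bal s)

theorem theta_mk (s : X →ₗ[Aᵐᵒᵖ] (X →₀ Aᵐᵒᵖ)) {N : Type} [AddCommGroup N] [Module A N]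
    (x : X) (n : N) :
    theta s (Tens.mk x n : Tens A X N) = (s x).sum fun y a => Finsupp.single y (a.unop • n) :=
  Tens.lift_mk (thetaF s) (thetaF_bal s) x n

/-- The map `X →₀ N → X ⊗_A N`. -/
def psi {N : Type} [AddCommGroup N] [Module A N] : (X →₀ N) →+ Tens A X N :=
  Finsupp.liftAddHom fun x => mkR x

theorem psi_single {N : Type} [AddCommGroup N] [Module A N] (x : X) (n : N) :
    psi (A := A) (Finsupp.single x n) = (Tens.mk x n : Tens A X N) :=
  Finsupp.liftAddHom_apply_single (fun y : X => (mkR y : N →+ Tens A X N)) x n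

theorem psi_theta (s : X →ₗ[Aᵐᵒᵖ] (X →₀ Aᵐᵒᵖ))
    (hs : Function.LeftInverse (Finsupp.linearCombination Aᵐᵒᵖ _root_.id) s)
    {N : Type} [AddCommGroup N] [Module A N] :
    ∀ z : Tens A X N, psi (A := A) (theta s z) = z := by
  refine Tens.ind ?_ ?_ ?_
  · simp
  · intro x n
    rw [theta_mk, Finsupp.sum, map_sum]
    have h1 : ∀ y ∈ (s x).support, psi (A := A) (Finsupp.single y ((s x y).unop • n)) =
        (Tens.mk ((s x y) • y) n : Tens A X N) := by
      intro y _
      rw [psi_single]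
      have h2 := Tens.mk_balance (N := N) ((s x y).unop) y n
      rw [op_unop] at h2
      exact h2.symm
    rw [Finset.sum_congr rfl h1]
    have h2 : ∑ y ∈ (s x).support, (Tens.mk ((s x y) • y) n : Tens A X N) =
        mkL (A := A) (X := X) n (∑ y ∈ (s x).support, (s x y) • y) :=
      (map_sum (mkL (A := A) (X := X) n) _ _).symm
    rw [h2]
    have h3 : (∑ y ∈ (s x).support, (s x y) • y) = x := by
      have h4 := hs x
      rw [Finsupp.linearCombination_apply, Finsupp.sum] at h4
      simpa using h4
    rw [h3]
    rfl
  · intro u v hu hv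
    rw [map_add, map_add, hu, hv]

theorem theta_natural (s : X →ₗ[Aᵐᵒᵖ] (X →₀ Aᵐᵒᵖ)) {L P : Type}
    [AddCommGroup L] [Module A L] [AddCommGroup P] [Module A P] (j : L →ₗ[A] P) :
    ∀ z : Tens A X L, theta s (Tens.mapRight (B := A) j z) =
      Finsupp.mapRange.addMonoidHom j.toAddMonoidHom (theta s z) := by
  refine Tens.ind ?_ ?_ ?_
  · simp
  · intro x l
    rw [Tens.mapRight_mk, theta_mk, theta_mk, Finsupp.sum, Finsupp.sum, map_sum]
    apply Finset.sum_congr rfl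
    intro y _
    show Finsupp.single y ((s x y).unop • j l) =
      Finsupp.mapRange j j.map_zero (Finsupp.single y ((s x y).unop • l))
    rw [Finsupp.mapRange_single, map_smul]
  · intro u v hu hv
    rw [map_add (Tens.mapRight (M := X) (B := A) j), map_add (theta s), hu, hv,
      map_add (theta s), map_add (Finsupp.mapRange.addMonoidHom j.toAddMonoidHom)]

theorem mapRight_injective [hX : Module.Projective Aᵐᵒᵖ X] {L P : Type}
    [AddCommGroup L] [Module A L] [AddCommGroup P] [Module A P]
    (j : L →ₗ[A] P) (hj : Function.Injective j) :
    Function.Injective (Tens.mapRight (M := X) (B := A) j) := by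
  obtain ⟨s, hs⟩ := hX.out
  have key : ∀ z, Tens.mapRight (M := X) (B := A) j z = 0 → z = 0 := by
    intro z hz
    have h1 : Finsupp.mapRange.addMonoidHom j.toAddMonoidHom (theta s z) = 0 := by
      rw [← theta_natural s j z, hz, map_zero]
    have h2 : theta s z = 0 := by
      ext y
      have h3 := DFunLike.congr_fun h1 y
      have h4 : j ((theta s z) y) = 0 := h3
      have h5 : j ((theta s z) y) = j 0 := by rw [h4, map_zero]
      exact hj h5
    rw [← psi_theta s hs z, h2, map_zero]
  intro a b hab
  have h6 : Tens.mapRight (M := X) (B := A) j (a - b) = 0 := by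
    rw [map_sub, hab, sub_self]
  exact sub_eq_zero.mp (key _ h6)

theorem mapRight_surjective {L P : Type}
    [AddCommGroup L] [Module A L] [AddCommGroup P] [Module A P]
    (j : L →ₗ[A] P) (hj : Function.Surjective j) :
    Function.Surjective (Tens.mapRight (M := X) (B := A) j) := by
  intro z
  refine Tens.ind (motive := fun z => ∃ w, Tens.mapRight (M := X) (B := A) j w = z) ?_ ?_ ?_ z
  · exact ⟨0, map_zero _⟩
  · intro x p
    obtain ⟨l, rfl⟩ := hj p
    exact ⟨Tens.mk x l, Tens.mapRight_mk _ _ _⟩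
  · rintro u v ⟨u', hu⟩ ⟨v', hv⟩
    exact ⟨u' + v', by rw [map_add, hu, hv]⟩

theorem mapRight_exact {K L M0 : Type}
    [AddCommGroup K] [Module A K] [AddCommGroup L] [Module A L] [AddCommGroup M0] [Module A M0]
    (i : K →ₗ[A] L) (p : L →ₗ[A] M0)
    (hexact : Function.Exact i p) (hsurj : Function.Surjective p) :
    Function.Exact (Tens.mapRight (M := X) (B := A) i)
      (Tens.mapRight (M := X) (B := A) p) := by
  have hcomp : ∀ w : Tens A X K,
      Tens.mapRight (M := X) (B := A) p (Tens.mapRight (M := X) (B := A) i w) = 0 := by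
    refine Tens.ind ?_ ?_ ?_
    · simp
    · intro x k
      rw [Tens.mapRight_mk, Tens.mapRight_mk, hexact.apply_apply_eq_zero, Tens.mk_zero_right]
    · intro u v hu hv
      rw [map_add (Tens.mapRight (M := X) (B := A) i),
        map_add (Tens.mapRight (M := X) (B := A) p), hu, hv, add_zero]
  set D := ((Tens.mapRight (M := X) (B := A) i).toAddMonoidHom).range with hD
  let π := QuotientAddGroup.mk' D
  have wd : ∀ (x : X) (f f' : L), p f = p f' → π (Tens.mk x f) = π (Tens.mk x f') := by
    intro x f f' hff
    have h0 : p (f - f') = 0 := by rw [map_sub, hff, sub_self]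
    obtain ⟨k, hk⟩ := (hexact _).mp h0
    have hdiff : (Tens.mk x f : Tens A X L) - Tens.mk x f' =
        Tens.mapRight (M := X) (B := A) i (Tens.mk x k) := by
      rw [Tens.mapRight_mk, hk]
      rw [sub_eq_add_neg, ← Tens.mk_neg_right, ← Tens.mk_add_right, ← sub_eq_add_neg]
    show ((Tens.mk x f : Tens A X L) : Tens A X L ⧸ D) = ((Tens.mk x f' : Tens A X L) : _)
    apply (QuotientAddGroup.eq (s := D) ..).mpr
    have h1 : -(Tens.mk x f : Tens A X L) + Tens.mk x f' =
        -((Tens.mk x f : Tens A X L) - Tens.mk x f') := by abel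
    rw [h1, hdiff]
    exact neg_mem ⟨Tens.mk x k, rfl⟩
  let pre : M0 → L := Function.surjInv hsurj
  have hpre : ∀ m, p (pre m) = m := fun m => Function.surjInv_eq hsurj m
  let G : X →+ M0 →+ (Tens A X L ⧸ D) :=
    { toFun := fun x =>
        { toFun := fun m => π (Tens.mk x (pre m))
          map_zero' := by
            show π (Tens.mk x (pre 0)) = 0
            have h1 : π (Tens.mk x (pre 0)) = π (Tens.mk x 0) := by
              apply wd; rw [hpre, map_zero]
            rw [h1, Tens.mk_zero_right, map_zero]
          map_add' := fun m m' => by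
            show π (Tens.mk x (pre (m + m'))) = π (Tens.mk x (pre m)) + π (Tens.mk x (pre m'))
            have h1 : π (Tens.mk x (pre (m + m'))) = π (Tens.mk x (pre m + pre m')) := by
              apply wd; rw [hpre, map_add, hpre, hpre]
            rw [h1, Tens.mk_add_right, map_add] }
      map_zero' := by
        apply AddMonoidHom.ext
        intro m
        show π (Tens.mk 0 (pre m)) = 0
        rw [Tens.mk_zero_left, map_zero]
      map_add' := fun x x' => by
        apply AddMonoidHom.ext
        intro m
        show π (Tens.mk (x + x') (pre m)) = π (Tens.mk x (pre m)) + π (Tens.mk x' (pre m))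
        rw [Tens.mk_add_left, map_add] }
  have hG : ∀ (a : A) (x : X) (m : M0), G (op a • x) m = G x (a • m) := by
    intro a x m
    show π (Tens.mk (op a • x) (pre m)) = π (Tens.mk x (pre (a • m)))
    rw [Tens.mk_balance]
    apply wd
    rw [map_smul, hpre, hpre]
  let β : Tens A X M0 →+ (Tens A X L ⧸ D) := Tens.lift G hG
  have βmk : ∀ (x : X) (f : L), β (Tens.mk x (p f)) = π (Tens.mk x f) := by
    intro x f
    have h1 : β (Tens.mk x (p f)) = π (Tens.mk x (pre (p f))) := Tens.lift_mk G hG x (p f)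
    rw [h1]
    apply wd
    rw [hpre]
  have βcomp : ∀ z : Tens A X L, β (Tens.mapRight (M := X) (B := A) p z) = π z := by
    refine Tens.ind ?_ ?_ ?_
    · rw [map_zero, map_zero, map_zero]
    · intro x f
      rw [Tens.mapRight_mk, βmk]
    · intro u v hu hv
      rw [map_add, map_add, map_add, hu, hv]
  intro z
  constructor
  · intro hz
    have h1 : π z = 0 := by rw [← βcomp z, hz, map_zero]
    have h2 : z ∈ D := by
      have h3 : ((z : Tens A X L) : Tens A X L ⧸ D) = ((0 : Tens A X L) : Tens A X L ⧸ D) := by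
        show π z = π 0
        rw [h1, map_zero]
      have h4 := (QuotientAddGroup.eq (s := D) ..).mp h3
      rw [add_zero] at h4
      exact neg_mem_iff.mp h4
    obtain ⟨w, hw⟩ := h2
    exact ⟨w, hw⟩
  · rintro ⟨w, rfl⟩
    exact hcomp w

end Flat

end

end TensFlat


namespace TMod

open Paper MulOpposite CategoryTheory TensFlat

noncomputable section

variable {A X : Type} [Ring A] [AddCommGroup X] [Module A X] [Module Aᵐᵒᵖ X]
  [SMulCommClass A Aᵐᵒᵖ X] [SMulCommClass Aᵐᵒᵖ A X]

/-- A morphism of pairs is linear over the trivial extension. -/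
def pairToTAux {P Q : PairMod A X} (f : P ⟶ Q) :
    @LinearMap (TrivSqZeroExt A X) (TrivSqZeroExt A X) _ _ (RingHom.id (TrivSqZeroExt A X))
      P.carrier Q.carrier _ _ P.toModule Q.toModule := by
  letI := P.toModule
  letI := Q.toModule
  refine ⟨⟨f.f, fun a b => map_add f.f a b⟩, ?_⟩
  intro t m
  show f.f (t.fst • m + P.σ (Tens.mk t.snd m)) =
    t.fst • f.f m + Q.σ (Tens.mk t.snd (f.f m))
  rw [map_add, map_smul, f.comm]

def pairToT {P Q : PairMod A X} (f : P ⟶ Q) : P.toModuleCat ⟶ Q.toModuleCat :=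
  letI := P.toModule
  letI := Q.toModule
  ModuleCat.ofHom (pairToTAux f)

/-- The projection `T ⊗_A M → M` as a morphism of pairs. -/
def pmapP (P : PairMod A X) : TFobj A X P.carrier ⟶ P where
  f := LinearMap.coprod LinearMap.id P.σ
  comm := fun x m => by
    show LinearMap.coprod LinearMap.id P.σ (tau A X P.carrier (Tens.mk x m)) =
      P.σ (Tens.mk x (m.1 + P.σ m.2))
    erw [tau_mk]
    show (0 : P.carrier) + P.σ (Tens.mk x m.1) = P.σ (Tens.mk x (m.1 + P.σ m.2))
    rw [zero_add, Tens.mk_add_right, map_add, P.nil, add_zero]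

/-- The inclusion `(X ⊗_A M, -Id ⊗ σ) → T ⊗_A M` as a morphism of pairs. -/
def imapP (P : PairMod A X) : ((XF A X).obj ((PMS A X).obj P)) ⟶ TFobj A X P.carrier where
  f := LinearMap.prod (-P.σ) LinearMap.id
  comm := fun x u => by
    show LinearMap.prod (-P.σ) LinearMap.id
        (Tens.mapRight (B := A) (-P.σ) (Tens.mk x u)) =
      tau A X P.carrier (Tens.mk x (LinearMap.prod (-P.σ) LinearMap.id u))
    erw [Tens.mapRight_mk, tau_mk]
    show ((-P.σ) (Tens.mk x ((-P.σ) u)), Tens.mk x ((-P.σ) u)) =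
      ((0 : P.carrier), Tens.mk x ((LinearMap.prod (-P.σ) LinearMap.id u).1))
    have h1 : (-P.σ) (Tens.mk x ((-P.σ) u)) = 0 := by
      show -(P.σ (Tens.mk x (-(P.σ u)))) = 0
      erw [Tens.mk_neg_right, map_neg, P.nil, neg_zero, neg_zero]
    rw [h1]
    rfl

theorem imap_injective (P : PairMod A X) : Function.Injective ⇑(pairToT (imapP P)) := by
  intro u v huv
  have h1 : ((-P.σ u, u) : P.carrier × Tens A X P.carrier) =
      ((-P.σ v, v) : P.carrier × Tens A X P.carrier) := huv
  exact congrArg Prod.snd h1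

theorem pmap_surjective (P : PairMod A X) : Function.Surjective ⇑(pairToT (pmapP P)) := by
  intro m
  obtain ⟨m', rfl⟩ : ∃ m' : P.carrier, m' = m := ⟨m, rfl⟩
  refine ⟨((m', 0) : P.carrier × Tens A X P.carrier), ?_⟩
  show m' + P.σ (0 : Tens A X P.carrier) = m'
  rw [map_zero, add_zero]

theorem exact_imap_pmap (P : PairMod A X) :
    Function.Exact ⇑(pairToT (imapP P)) ⇑(pairToT (pmapP P)) := by
  intro y
  obtain ⟨y', rfl⟩ : ∃ y' : P.carrier × Tens A X P.carrier, y' = y := ⟨y, rfl⟩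
  constructor
  · intro hy
    have h1 : y'.1 + P.σ y'.2 = 0 := hy
    refine ⟨y'.2, ?_⟩
    have h2 : -P.σ y'.2 = y'.1 := neg_eq_of_add_eq_zero_left h1
    show ((-P.σ y'.2, y'.2) : P.carrier × Tens A X P.carrier) = y'
    rw [h2]
  · rintro ⟨u, rfl⟩
    show -P.σ u + P.σ u = 0
    rw [neg_add_cancel]

set_option maxHeartbeats 1000000 in
theorem TF_projective {L : Type} [AddCommGroup L] [Module A L]
    (hL : Module.Projective A L) :
    Projective ((TFobj A X L).toModuleCat) := by
  constructor
  intro E X' f e he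
  have hesurj : Function.Surjective e := (ModuleCat.epi_iff_surjective e).mp he
  letI mTF : Module (TrivSqZeroExt A X) (L × Tens A X L) := (TFobj A X L).toModule
  letI mE : Module A (↑E) := Module.compHom (↑E) (TrivSqZeroExt.inlHom A X)
  letI mX' : Module A (↑X') := Module.compHom (↑X') (TrivSqZeroExt.inlHom A X)
  haveI := hL
  let f₀ : L →ₗ[A] (↑X') :=
    { toFun := fun l => f ((l, 0) : L × Tens A X L)
      map_add' := fun l l' => by
        have h1 : ((l + l', (0 : Tens A X L)) : L × Tens A X L) =
            ((l, 0) : L × Tens A X L) + ((l', 0) : L × Tens A X L) := by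
          rw [Prod.mk_add_mk, add_zero]
        show f ((l + l', (0 : Tens A X L)) : L × Tens A X L) = _
        rw [h1]; exact map_add f.hom _ _
      map_smul' := fun a l => by
        have h1 : (TrivSqZeroExt.inl a : TrivSqZeroExt A X) • ((l, 0) : L × Tens A X L) =
            ((a • l, 0) : L × Tens A X L) := by
          show (TrivSqZeroExt.inl a : TrivSqZeroExt A X).fst • ((l, 0) : L × Tens A X L) +
            tau A X L (Tens.mk (TrivSqZeroExt.inl a : TrivSqZeroExt A X).snd
              ((l, 0) : L × Tens A X L)) = _
          rw [TrivSqZeroExt.fst_inl, TrivSqZeroExt.snd_inl, Tens.mk_zero_left, map_zero, add_zero,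
            Prod.smul_mk, smul_zero]
        show f ((a • l, 0) : L × Tens A X L) =
          (TrivSqZeroExt.inl a : TrivSqZeroExt A X) • f ((l, 0) : L × Tens A X L)
        exact (congrArg f.hom h1).symm.trans (map_smul f.hom _ _) }
  let e₀ : (↑E) →ₗ[A] (↑X') :=
    { toFun := e
      map_add' := fun a b => map_add e.hom a b
      map_smul' := fun a v => map_smul e.hom (TrivSqZeroExt.inl a) v }
  obtain ⟨h₀, hh₀⟩ := Module.projective_lifting_property e₀ f₀ hesurj
  have hh₀' : ∀ l, e (h₀ l) = f ((l, 0) : L × Tens A X L) := fun l => DFunLike.congr_fun hh₀ l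
  let ΘF : X →+ L →+ (↑E) :=
    { toFun := fun x =>
        { toFun := fun l => (TrivSqZeroExt.inr x : TrivSqZeroExt A X) • h₀ l
          map_zero' := by
            show (TrivSqZeroExt.inr x : TrivSqZeroExt A X) • h₀ 0 = 0
            rw [map_zero, smul_zero]
          map_add' := fun l l' => by
            show (TrivSqZeroExt.inr x : TrivSqZeroExt A X) • h₀ (l + l') = _
            rw [map_add, smul_add] }
      map_zero' := by
        apply AddMonoidHom.ext
        intro l
        show (TrivSqZeroExt.inr (0 : X) : TrivSqZeroExt A X) • h₀ l = 0
        rw [TrivSqZeroExt.inr_zero, zero_smul]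
      map_add' := fun x x' => by
        apply AddMonoidHom.ext
        intro l
        show (TrivSqZeroExt.inr (x + x') : TrivSqZeroExt A X) • h₀ l =
          (TrivSqZeroExt.inr x : TrivSqZeroExt A X) • h₀ l +
          (TrivSqZeroExt.inr x' : TrivSqZeroExt A X) • h₀ l
        rw [TrivSqZeroExt.inr_add, add_smul] }
  have hΘF : ∀ (a : A) (x : X) (l : L), ΘF (op a • x) l = ΘF x (a • l) := by
    intro a x l
    show (TrivSqZeroExt.inr (op a • x) : TrivSqZeroExt A X) • h₀ l =
      (TrivSqZeroExt.inr x : TrivSqZeroExt A X) • h₀ (a • l)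
    have h1 : (TrivSqZeroExt.inr (op a • x) : TrivSqZeroExt A X) =
        TrivSqZeroExt.inr x * TrivSqZeroExt.inl a := (TrivSqZeroExt.inr_mul_inl a x).symm
    rw [h1, mul_smul]
    congr 1
    exact (map_smul h₀ a l).symm
  let Θ : Tens A X L →+ (↑E) := Tens.lift ΘF hΘF
  have Θmk : ∀ (x : X) (l : L), Θ (Tens.mk x l) =
      (TrivSqZeroExt.inr x : TrivSqZeroExt A X) • h₀ l := fun x l => Tens.lift_mk ΘF hΘF x l
  have Θsmul : ∀ (a : A) (u : Tens A X L),
      Θ (a • u) = (TrivSqZeroExt.inl a : TrivSqZeroExt A X) • Θ u := by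
    intro a
    refine Tens.ind ?_ ?_ ?_
    · rw [smul_zero, map_zero, smul_zero]
    · intro x l
      rw [Tens.smul_mk, Θmk, Θmk, ← TrivSqZeroExt.inl_mul_inr, mul_smul]
    · intro u v hu hv
      rw [smul_add, map_add, map_add, hu, hv, smul_add]
  have Θkill : ∀ (x : X) (u : Tens A X L),
      (TrivSqZeroExt.inr x : TrivSqZeroExt A X) • Θ u = 0 := by
    intro x
    refine Tens.ind ?_ ?_ ?_
    · rw [map_zero, smul_zero]
    · intro x' l
      rw [Θmk, ← mul_smul, TrivSqZeroExt.inr_mul_inr, zero_smul]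
    · intro u v hu hv
      rw [map_add, smul_add, hu, hv, add_zero]
  have hsm : ∀ (a : A) (l : L),
      (TrivSqZeroExt.inl a : TrivSqZeroExt A X) • h₀ l = h₀ (a • l) :=
    fun a l => (map_smul h₀ a l).symm
  let hhat0 : @LinearMap (TrivSqZeroExt A X) (TrivSqZeroExt A X) _ _
      (RingHom.id (TrivSqZeroExt A X)) (L × Tens A X L) (↑E) _ _ mTF _ :=
    { toFun := fun v => h₀ v.1 + Θ v.2
      map_add' := fun v w => by
        show h₀ (v.1 + w.1) + Θ (v.2 + w.2) = (h₀ v.1 + Θ v.2) + (h₀ w.1 + Θ w.2)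
        rw [map_add, map_add]
        abel
      map_smul' := fun t v => by
        have hv1 : t • v = ((t.fst • v.1, t.fst • v.2 + Tens.mk t.snd v.1) :
            L × Tens A X L) := by
          show t.fst • v + tau A X L (Tens.mk t.snd v) = _
          rw [tau_mk]
          refine Prod.ext ?_ ?_
          · show t.fst • v.1 + 0 = t.fst • v.1
            rw [add_zero]
          · rfl
        show h₀ ((t • v).1) + Θ ((t • v).2) = t • (h₀ v.1 + Θ v.2)
        rw [hv1]
        show h₀ (t.fst • v.1) + Θ (t.fst • v.2 + Tens.mk t.snd v.1) =
          t • (h₀ v.1 + Θ v.2)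
        rw [map_add, Θmk, Θsmul]
        conv_rhs => rw [← TrivSqZeroExt.inl_fst_add_inr_snd_eq t]
        rw [add_smul, smul_add, smul_add, Θkill, add_zero, hsm]
        abel }
  refine ⟨(ModuleCat.ofHom (X := L × Tens A X L) (Y := E) hhat0 : (TFobj A X L).toModuleCat ⟶ E), ?_⟩
  ext v
  obtain ⟨v', rfl⟩ : ∃ v' : L × Tens A X L, v' = v := ⟨v, rfl⟩
  show e (h₀ v'.1 + Θ v'.2) = f v'
  have h2 : ∀ u : Tens A X L, e (Θ u) = f (((0 : L), u) : L × Tens A X L) := by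
    refine Tens.ind ?_ ?_ ?_
    · rw [map_zero, map_zero]
      rw [show (((0 : L), (0 : Tens A X L)) : L × Tens A X L) = 0 from rfl]; exact (map_zero f.hom).symm
    · intro x l
      rw [Θmk]
      have h3 : (TrivSqZeroExt.inr x : TrivSqZeroExt A X) • ((l, 0) : L × Tens A X L) =
          (((0 : L), Tens.mk x l) : L × Tens A X L) := by
        show (TrivSqZeroExt.inr x : TrivSqZeroExt A X).fst • ((l, 0) : L × Tens A X L) +
          tau A X L (Tens.mk (TrivSqZeroExt.inr x : TrivSqZeroExt A X).snd
            ((l, 0) : L × Tens A X L)) = _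
        rw [TrivSqZeroExt.fst_inr, TrivSqZeroExt.snd_inr, tau_mk, zero_smul, zero_add]
      calc e ((TrivSqZeroExt.inr x : TrivSqZeroExt A X) • h₀ l)
          = (TrivSqZeroExt.inr x : TrivSqZeroExt A X) • e (h₀ l) :=
            map_smul e.hom (TrivSqZeroExt.inr x) (h₀ l)
        _ = (TrivSqZeroExt.inr x : TrivSqZeroExt A X) • f ((l, 0) : L × Tens A X L) := by
            rw [hh₀']
        _ = f ((TrivSqZeroExt.inr x : TrivSqZeroExt A X) • ((l, 0) : L × Tens A X L)) :=
            (map_smul f.hom (TrivSqZeroExt.inr x) _).symm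
        _ = f (((0 : L), Tens.mk x l) : L × Tens A X L) := by rw [h3]
    · intro u w hu hw
      rw [map_add, map_add, hu, hw]; refine (map_add f.hom _ _).symm.trans ?_
      congr 1
      show (((0 : L) + 0, u + w) : L × Tens A X L) = (((0 : L), u + w) : L × Tens A X L)
      rw [add_zero]
  rw [map_add e.hom (h₀ v'.1) (Θ v'.2), hh₀', h2]; refine (map_add f.hom _ _).symm.trans ?_
  congr 1
  show ((v'.1 + 0, 0 + v'.2) : L × Tens A X L) = v'
  rw [add_zero, zero_add]

theorem TF_pd [Module.Projective Aᵐᵒᵖ X] {n : ℕ} : ∀ {L : Type} [AddCommGroup L] [Module A L],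
    ProjDimLE A n (ModuleCat.of A L) →
    FinProjDim (TrivSqZeroExt A X) ((TFobj A X L).toModuleCat) := by
  induction n with
  | zero =>
    intro L _ _ h
    exact ⟨0, TF_projective (PDLemmas.module_of_projective h)⟩
  | succ n ih =>
    intro L _ _ h
    obtain ⟨F, K, i, p, hF, hiinj, hpsurj, hexi, hK⟩ := PDLemmas.pd_succ_iff.mp h
    obtain ⟨nk, hnk⟩ := ih (L := K.carrier) hK
    refine ⟨nk + 1, PDLemmas.pd_succ_iff.mpr
      ⟨(TFobj A X F.carrier).toModuleCat, (TFobj A X K.carrier).toModuleCat,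
        pairToT ((TF A X).map i), pairToT ((TF A X).map p), ?_, ?_, ?_, ?_, hnk⟩⟩
    · exact TF_projective (PDLemmas.module_of_projective hF)
    · exact Function.Injective.prodMap hiinj (mapRight_injective i.hom hiinj)
    · exact Function.Surjective.prodMap hpsurj (mapRight_surjective p.hom hpsurj)
    · exact PDLemmas.exact_prodMap hexi (mapRight_exact i.hom p.hom hexi hpsurj)

end

end TMod


open CategoryTheory Paper in
/-- If `A` has finite left global dimension, `X` is projective as a right `A`-module and
the underlying `A`-module of a `T`-module `(M, σ)` has finite projective dimension, then
`(M, σ)` has finite projective dimension over `T` iff `(X ⊗_A M, -Id_X ⊗ σ)` does. -/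
theorem stmt_10 (A X : Type) [Ring A] [AddCommGroup X] [Module A X] [Module Aᵐᵒᵖ X]
    [SMulCommClass A Aᵐᵒᵖ X] [SMulCommClass Aᵐᵒᵖ A X]
    [Module.Projective Aᵐᵒᵖ X]
    (hA : ∃ n, ∀ M : ModuleCat.{0} A, ProjDimLE A n M)
    (P : PairMod A X)
    (hM : FinProjDim A (ModuleCat.of A P.carrier)) :
    FinProjDim (TrivSqZeroExt A X) P.toModuleCat ↔
      FinProjDim (TrivSqZeroExt A X) ((XF A X).obj ((PMS A X).obj P)).toModuleCat := by
  obtain ⟨n, hn⟩ := hM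
  have hQfin : FinProjDim (TrivSqZeroExt A X) ((TFobj A X P.carrier).toModuleCat) :=
    TMod.TF_pd hn
  exact PDLemmas.finProjDim_iff_of_ses (TMod.pairToT (TMod.imapP P)) (TMod.pairToT (TMod.pmapP P))
    (TMod.imap_injective P) (TMod.pmap_surjective P) (TMod.exact_imap_pmap P) hQfin
end
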